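/- arXiv:2203.08233 — 5 statements merged into one kernel-verified Lean document; each statement's English description precedes it below -/
import Mathlib

section
/- Let K ≥ 1 be an integer and let A be a random variable uniformly distributed on the integers {-K, -K+1, …, K}. Then max_{x∈ℤ} P(A = x) = 1/(2K+1) ≤ 1 - 4K/(2K+1)², and for every real t, |E[exp(2πi A t)]|² ≤ 1 - 4K/(2K+1)² + (4K/(2K+1)²)·cos(2πt). In particular, if β is the symmetric random variable taking values 1 and -1 each with probability 2K/(2K+1)² and 0 with probability 1 - 4K/(2K+1)², then |E[exp(2πi A t)]|² ≤ E[exp(2πi β t)] for all real t. -/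
/-! With θ = 2πt the characteristic function of `A` is `(2K+1)⁻¹ ∑_{|a| ≤ K} e^{iaθ}`, whose
squared modulus is `(2K+1)⁻² ∑_{a,b} cos((a-b)θ)`. Subtracting it from `(2K+1)² = ∑_{a,b} 1`
leaves a sum of nonnegative terms `1 - cos((a-b)θ)`, and the `4K` pairs with `|a - b| = 1`
alone contribute `4K(1 - cos θ)`. The resulting bound is exactly the characteristic function
of `β`, which is real since `β` is symmetric. -/

open MeasureTheory Real

section Distribution

variable {Ω α E : Type*} [MeasurableSpace Ω] [MeasurableSpace α] {μ : Measure Ω} {X : Ω → α}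

theorem ae_mem_of_sum_measureReal_eq_one [MeasurableSingletonClass α] [IsProbabilityMeasure μ]
    (hX : Measurable X) {S : Finset α} (hS : ∑ x ∈ S, μ.real {ω | X ω = x} = 1) :
    ∀ᵐ ω ∂μ, X ω ∈ S := by
  refine (ae_mem_iff_measure_eq (hX S.measurableSet).nullMeasurableSet).2 ?_
  rw [measure_univ, ← ENNReal.toReal_eq_one_iff, ← measureReal_def,
    ← sum_measureReal_preimage_singleton S fun x _ => hX (measurableSet_singleton x)]
  exact hS

theorem integral_comp_eq_sum_of_ae_mem [DiscreteMeasurableSpace α] [Countable α]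
    [NormedAddCommGroup E] [NormedSpace ℝ E] [CompleteSpace E] [IsFiniteMeasure μ]
    (hX : Measurable X) {S : Finset α} (hS : ∀ᵐ ω ∂μ, X ω ∈ S) (g : α → E) :
    ∫ ω, g (X ω) ∂μ = ∑ x ∈ S, μ.real {ω | X ω = x} • g x := by
  have hS' : ∀ᵐ x ∂μ.map X, x ∈ S := (ae_map_iff hX.aemeasurable S.measurableSet).2 hS
  rw [← integral_map hX.aemeasurable StronglyMeasurable.of_discrete.aestronglyMeasurable,
    ← Measure.restrict_eq_self_of_ae_mem hS', setIntegral_finset S IntegrableOn.finset]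
  simp_rw [map_measureReal_apply hX (measurableSet_singleton _)]
  rfl

end Distribution

theorem re_exp_mul_I_mul_conj (x y : ℝ) :
    (Complex.exp (x * Complex.I) * starRingEnd ℂ (Complex.exp (y * Complex.I))).re =
      Real.cos (x - y) := by
  rw [← Complex.exp_conj, ← Complex.exp_add, map_mul, Complex.conj_ofReal, Complex.conj_I,
    show (x : ℂ) * Complex.I + y * -Complex.I = ((x - y : ℝ) : ℂ) * Complex.I by
      push_cast; ring,
    Complex.exp_ofReal_mul_I_re]

theorem norm_sum_exp_mul_I_sq {ι : Type*} (S : Finset ι) (x : ι → ℝ) :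
    ‖∑ i ∈ S, Complex.exp (x i * Complex.I)‖ ^ 2 = ∑ i ∈ S, ∑ j ∈ S, Real.cos (x i - x j) := by
  rw [← Complex.normSq_eq_norm_sq, ← Complex.ofReal_re (Complex.normSq _), ← Complex.mul_conj,
    map_sum, Finset.sum_mul_sum, Complex.re_sum]
  simp only [Complex.re_sum, re_exp_mul_I_mul_conj]

theorem two_mul_sub_mul_one_sub_cos_le_sum_Icc {m M : ℤ} (h : m ≤ M) (θ : ℝ) :
    2 * ((M : ℝ) - m) * (1 - Real.cos θ) ≤
      ∑ a ∈ Finset.Icc m M, ∑ b ∈ Finset.Icc m M, (1 - Real.cos (a * θ - b * θ)) := by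
  set f : ℤ × ℤ → ℝ := fun p => 1 - Real.cos (p.1 * θ - p.2 * θ)
  set up := (Finset.Ico m M).image fun a => (a, a + 1)
  set down := (Finset.Ico m M).image fun a => (a + 1, a)
  have hdisj : Disjoint up down := by
    simp only [up, down, Finset.disjoint_left, Finset.mem_image]
    rintro _ ⟨a, -, rfl⟩ ⟨b, -, hb⟩
    simp only [Prod.ext_iff] at hb
    omega
  have hsub : up ∪ down ⊆ Finset.Icc m M ×ˢ Finset.Icc m M := by
    simp only [up, down, Finset.union_subset_iff, Finset.image_subset_iff, Finset.mem_product,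
      Finset.mem_Icc, Finset.mem_Ico]
    constructor <;> intro a ha <;> omega
  have hcard : ((Finset.Ico m M).card : ℝ) = M - m := by
    rw [Int.card_Ico]
    exact_mod_cast Int.toNat_of_nonneg (sub_nonneg.2 h)
  have hup : ∑ p ∈ up, f p = (M - m) * (1 - Real.cos θ) := by
    rw [Finset.sum_image fun a _ b _ hab => by simpa using hab, ← hcard, ← nsmul_eq_mul,
      ← Finset.sum_const]
    refine Finset.sum_congr rfl fun a _ => ?_
    simp only [f]
    push_cast
    rw [← Real.cos_neg]
    ring_nf
  have hdown : ∑ p ∈ down, f p = (M - m) * (1 - Real.cos θ) := by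
    rw [Finset.sum_image fun a _ b _ hab => by simpa using hab, ← hcard, ← nsmul_eq_mul,
      ← Finset.sum_const]
    refine Finset.sum_congr rfl fun a _ => ?_
    simp only [f]
    push_cast
    ring_nf
  calc 2 * ((M : ℝ) - m) * (1 - Real.cos θ) = ∑ p ∈ up ∪ down, f p := by
        rw [Finset.sum_union hdisj, hup, hdown]; ring
    _ ≤ ∑ p ∈ Finset.Icc m M ×ˢ Finset.Icc m M, f p :=
        Finset.sum_le_sum_of_subset_of_nonneg hsub fun p _ _ => sub_nonneg.2 (Real.cos_le_one _)
    _ = _ := Finset.sum_product _ _ f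

theorem natCast_card_Icc_of_le {m M : ℤ} (h : m ≤ M) :
    ((Finset.Icc m M).card : ℝ) = M - m + 1 := by
  rw [Int.card_Icc, ← Int.cast_natCast, Int.toNat_of_nonneg (by omega)]
  push_cast
  ring

theorem norm_sum_exp_Icc_sq_le {m M : ℤ} (h : m ≤ M) (θ : ℝ) :
    ‖∑ a ∈ Finset.Icc m M, Complex.exp (↑(a * θ) * Complex.I)‖ ^ 2 ≤
      ((M : ℝ) - m + 1) ^ 2 - 2 * ((M : ℝ) - m) * (1 - Real.cos θ) := by
  have hdrop := two_mul_sub_mul_one_sub_cos_le_sum_Icc h θ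
  simp only [Finset.sum_sub_distrib, Finset.sum_const, nsmul_eq_mul, mul_one,
    natCast_card_Icc_of_le h] at hdrop
  rw [norm_sum_exp_mul_I_sq _ fun a : ℤ => (a : ℝ) * θ]
  linarith

theorem exp_two_pi_I_intCast_mul (x : ℤ) (t : ℝ) :
    Complex.exp (2 * π * Complex.I * x * t) =
      Complex.exp (↑((x : ℝ) * (2 * π * t)) * Complex.I) := by
  push_cast
  ring_nf

section CharacteristicFunction

variable {Ω : Type*} [MeasurableSpace Ω] {μ : Measure Ω} [IsProbabilityMeasure μ] {X : Ω → ℤ}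

theorem norm_integral_exp_sq_le_of_uniform_Icc (hX : Measurable X) {m M : ℤ} (h : m ≤ M)
    (hunif : ∀ x ∈ Finset.Icc m M, μ.real {ω | X ω = x} = 1 / ((M : ℝ) - m + 1)) (t : ℝ) :
    ‖∫ ω, Complex.exp (2 * π * Complex.I * X ω * t) ∂μ‖ ^ 2 ≤
      1 - 2 * ((M : ℝ) - m) / ((M : ℝ) - m + 1) ^ 2 * (1 - Real.cos (2 * π * t)) := by
  have hn : (0 : ℝ) < M - m + 1 := by exact_mod_cast (by omega : (0 : ℤ) < M - m + 1)
  have hX_mem : ∀ᵐ ω ∂μ, X ω ∈ Finset.Icc m M := by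
    refine ae_mem_of_sum_measureReal_eq_one hX ?_
    rw [Finset.sum_congr rfl hunif, Finset.sum_const, nsmul_eq_mul, natCast_card_Icc_of_le h]
    field_simp
  rw [integral_comp_eq_sum_of_ae_mem hX hX_mem fun x : ℤ => Complex.exp (2 * π * Complex.I * x * t),
    Finset.sum_congr rfl fun x hx => by rw [hunif x hx], ← Finset.smul_sum, norm_smul, mul_pow,
    Real.norm_of_nonneg (by positivity)]
  simp_rw [exp_two_pi_I_intCast_mul]
  calc (1 / ((M : ℝ) - m + 1)) ^ 2 * ‖∑ x ∈ Finset.Icc m M,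
        Complex.exp (↑((x : ℝ) * (2 * π * t)) * Complex.I)‖ ^ 2
      ≤ (1 / ((M : ℝ) - m + 1)) ^ 2 *
          (((M : ℝ) - m + 1) ^ 2 - 2 * ((M : ℝ) - m) * (1 - Real.cos (2 * π * t))) :=
        mul_le_mul_of_nonneg_left (norm_sum_exp_Icc_sq_le h _) (by positivity)
    _ = _ := by field_simp

theorem re_integral_exp_of_symmetric_three_point (hX : Measurable X) {p : ℝ}
    (h₁ : μ.real {ω | X ω = 1} = p) (hm₁ : μ.real {ω | X ω = -1} = p)
    (h₀ : μ.real {ω | X ω = 0} = 1 - 2 * p) (t : ℝ) :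
    (∫ ω, Complex.exp (2 * π * Complex.I * X ω * t) ∂μ).re =
      1 - 2 * p * (1 - Real.cos (2 * π * t)) := by
  have hX_mem : ∀ᵐ ω ∂μ, X ω ∈ ({-1, 0, 1} : Finset ℤ) := by
    refine ae_mem_of_sum_measureReal_eq_one hX ?_
    rw [Finset.sum_insert (by decide), Finset.sum_insert (by decide), Finset.sum_singleton,
      hm₁, h₀, h₁]
    ring
  rw [integral_comp_eq_sum_of_ae_mem hX hX_mem fun x : ℤ => Complex.exp (2 * π * Complex.I * x * t),
    Finset.sum_insert (by decide), Finset.sum_insert (by decide), Finset.sum_singleton,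
    hm₁, h₀, h₁]
  simp only [exp_two_pi_I_intCast_mul, Complex.add_re, Complex.smul_re,
    Complex.exp_ofReal_mul_I_re, smul_eq_mul]
  push_cast
  simp only [neg_one_mul, zero_mul, one_mul, Real.cos_neg, Real.cos_zero]
  ring

end CharacteristicFunction

theorem stmt_6_general (K : ℕ)
    {Ω : Type} [MeasurableSpace Ω] (μ : Measure Ω) [IsProbabilityMeasure μ]
    (A : Ω → ℤ) (hA : Measurable A)
    -- `A` is uniformly distributed on `{-K, …, K}`
    (hdist : ∀ x : ℤ, (μ {ω | A ω = x}).toReal =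
      if |x| ≤ (K : ℤ) then 1 / (2 * (K : ℝ) + 1) else 0) :
    -- `max_x P(A = x) = 1/(2K+1)`
    IsGreatest (Set.range fun x : ℤ => (μ {ω | A ω = x}).toReal) (1 / (2 * (K : ℝ) + 1)) ∧
    -- `1/(2K+1) ≤ 1 - 4K/(2K+1)²`
    1 / (2 * (K : ℝ) + 1) ≤ 1 - 4 * (K : ℝ) / (2 * (K : ℝ) + 1) ^ 2 ∧
    -- `|E[exp(2πiAt)]|² ≤ 1 - 4K/(2K+1)² + (4K/(2K+1)²)·cos(2πt)`
    (∀ t : ℝ,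
      ‖∫ ω, Complex.exp (2 * (Real.pi : ℂ) * Complex.I * (A ω : ℂ) * (t : ℂ)) ∂μ‖ ^ 2 ≤
        1 - 4 * (K : ℝ) / (2 * (K : ℝ) + 1) ^ 2 +
          (4 * (K : ℝ) / (2 * (K : ℝ) + 1) ^ 2) * Real.cos (2 * Real.pi * t)) ∧
    -- in particular, `|E[exp(2πiAt)]|² ≤ E[exp(2πiβt)]` for `β` symmetric on `{-1,0,1}`
    -- taking the values `±1` with probability `2K/(2K+1)²` each
    (∀ {Ω' : Type} [MeasurableSpace Ω'] (μ' : Measure Ω') [IsProbabilityMeasure μ']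
      (β : Ω' → ℤ), Measurable β →
      (μ' {ω | β ω = 1}).toReal = 2 * (K : ℝ) / (2 * (K : ℝ) + 1) ^ 2 →
      (μ' {ω | β ω = -1}).toReal = 2 * (K : ℝ) / (2 * (K : ℝ) + 1) ^ 2 →
      (μ' {ω | β ω = 0}).toReal = 1 - 4 * (K : ℝ) / (2 * (K : ℝ) + 1) ^ 2 →
      ∀ t : ℝ,
        ‖∫ ω, Complex.exp (2 * (Real.pi : ℂ) * Complex.I * (A ω : ℂ) * (t : ℂ)) ∂μ‖ ^ 2 ≤
          (∫ ω, Complex.exp (2 * (Real.pi : ℂ) * Complex.I * (β ω : ℂ) * (t : ℂ)) ∂μ').re) := by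
  have hchar (t : ℝ) := norm_integral_exp_sq_le_of_uniform_Icc hA (neg_le_self K.cast_nonneg)
    (fun x hx => by
      rw [measureReal_def, hdist, if_pos (abs_le.2 (Finset.mem_Icc.1 hx))]
      push_cast
      ring_nf) t
  push_cast at hchar
  refine ⟨⟨⟨0, by simp [hdist]⟩, ?_⟩, ?_, fun t => (hchar t).trans_eq (by ring), ?_⟩
  · rintro _ ⟨x, rfl⟩
    dsimp only
    rw [hdist]
    split_ifs
    · exact le_rfl
    · positivity
  · have : (2 * K : ℝ) ≤ 4 * K ^ 2 := by exact_mod_cast (by nlinarith : 2 * K ≤ 4 * K ^ 2)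
    field_simp
    nlinarith
  · intro Ω' _ μ' _ β hβ h₁ hm₁ h₀ t
    rw [re_integral_exp_of_symmetric_three_point hβ h₁ hm₁ (by rw [measureReal_def, h₀]; ring)]
    exact (hchar t).trans_eq (by ring)

theorem stmt_6 (K : ℕ) (hK : 1 ≤ K)
    {Ω : Type} [MeasurableSpace Ω] (μ : Measure Ω) [IsProbabilityMeasure μ]
    (A : Ω → ℤ) (hA : Measurable A)
    -- `A` is uniformly distributed on `{-K, …, K}`
    (hdist : ∀ x : ℤ, (μ {ω | A ω = x}).toReal =
      if |x| ≤ (K : ℤ) then 1 / (2 * (K : ℝ) + 1) else 0) :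
    -- `max_x P(A = x) = 1/(2K+1)`
    IsGreatest (Set.range fun x : ℤ => (μ {ω | A ω = x}).toReal) (1 / (2 * (K : ℝ) + 1)) ∧
    -- `1/(2K+1) ≤ 1 - 4K/(2K+1)²`
    1 / (2 * (K : ℝ) + 1) ≤ 1 - 4 * (K : ℝ) / (2 * (K : ℝ) + 1) ^ 2 ∧
    -- `|E[exp(2πiAt)]|² ≤ 1 - 4K/(2K+1)² + (4K/(2K+1)²)·cos(2πt)`
    (∀ t : ℝ,
      ‖∫ ω, Complex.exp (2 * (Real.pi : ℂ) * Complex.I * (A ω : ℂ) * (t : ℂ)) ∂μ‖ ^ 2 ≤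
        1 - 4 * (K : ℝ) / (2 * (K : ℝ) + 1) ^ 2 +
          (4 * (K : ℝ) / (2 * (K : ℝ) + 1) ^ 2) * Real.cos (2 * Real.pi * t)) ∧
    -- in particular, `|E[exp(2πiAt)]|² ≤ E[exp(2πiβt)]` for `β` symmetric on `{-1,0,1}`
    -- taking the values `±1` with probability `2K/(2K+1)²` each
    (∀ {Ω' : Type} [MeasurableSpace Ω'] (μ' : Measure Ω') [IsProbabilityMeasure μ']
      (β : Ω' → ℤ), Measurable β →
      (μ' {ω | β ω = 1}).toReal = 2 * (K : ℝ) / (2 * (K : ℝ) + 1) ^ 2 →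
      (μ' {ω | β ω = -1}).toReal = 2 * (K : ℝ) / (2 * (K : ℝ) + 1) ^ 2 →
      (μ' {ω | β ω = 0}).toReal = 1 - 4 * (K : ℝ) / (2 * (K : ℝ) + 1) ^ 2 →
      ∀ t : ℝ,
        ‖∫ ω, Complex.exp (2 * (Real.pi : ℂ) * Complex.I * (A ω : ℂ) * (t : ℂ)) ∂μ‖ ^ 2 ≤
          (∫ ω, Complex.exp (2 * (Real.pi : ℂ) * Complex.I * (β ω : ℂ) * (t : ℂ)) ∂μ').re) :=
  stmt_6_general K μ A hA hdist
end

section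
/- There exists a universal constant C > 0 with the following property. Let r be a positive integer, let 0 < q < 1, and let a_1, …, a_m be i.i.d. ℤ-valued random variables. Suppose there exists a ℤ-valued random variable β supported on {-1, 0, 1} with P(β = 1) = P(β = -1) ≥ q such that for all real t, |E[exp(2πi a_1 t)]|^r ≤ E[exp(2πi β t)]. Then for every integer x, P(a_1 + a_2 + ⋯ + a_m = x) ≤ C·√r/√(q·m). -/
open MeasureTheory ProbabilityTheory


section Aux

variable {Ω : Type*} {mΩ : MeasurableSpace Ω} {μ : Measure Ω} [IsProbabilityMeasure μ]

lemma aux_integrable_of_le_one {X : Ω → ℝ} (hX : Measurable X) (hb : ∀ ω, |X ω| ≤ 1) :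
    Integrable X μ := by
  refine (integrable_const (1:ℝ)).mono' hX.aestronglyMeasurable (ae_of_all _ ?_)
  simpa [Real.norm_eq_abs] using hb

lemma indepFun_integral_mul_complex {X Y : Ω → ℂ} (h : IndepFun X Y μ)
    (hX : Measurable X) (hY : Measurable Y)
    (hbX : ∀ ω, ‖X ω‖ ≤ 1) (hbY : ∀ ω, ‖Y ω‖ ≤ 1) :
    ∫ ω, X ω * Y ω ∂μ = (∫ ω, X ω ∂μ) * ∫ ω, Y ω ∂μ := by
  have hXr : Measurable fun ω => (X ω).re := Complex.measurable_re.comp hX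
  have hXi : Measurable fun ω => (X ω).im := Complex.measurable_im.comp hX
  have hYr : Measurable fun ω => (Y ω).re := Complex.measurable_re.comp hY
  have hYi : Measurable fun ω => (Y ω).im := Complex.measurable_im.comp hY
  have bXr : ∀ ω, |(X ω).re| ≤ 1 := fun ω => le_trans (Complex.abs_re_le_norm _) (hbX ω)
  have bXi : ∀ ω, |(X ω).im| ≤ 1 := fun ω => le_trans (Complex.abs_im_le_norm _) (hbX ω)
  have bYr : ∀ ω, |(Y ω).re| ≤ 1 := fun ω => le_trans (Complex.abs_re_le_norm _) (hbY ω)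
  have bYi : ∀ ω, |(Y ω).im| ≤ 1 := fun ω => le_trans (Complex.abs_im_le_norm _) (hbY ω)
  have iXr : Integrable (fun ω => (X ω).re) μ := aux_integrable_of_le_one hXr bXr
  have iXi : Integrable (fun ω => (X ω).im) μ := aux_integrable_of_le_one hXi bXi
  have iYr : Integrable (fun ω => (Y ω).re) μ := aux_integrable_of_le_one hYr bYr
  have iYi : Integrable (fun ω => (Y ω).im) μ := aux_integrable_of_le_one hYi bYi
  have hrr : IndepFun (fun ω => (X ω).re) (fun ω => (Y ω).re) μ :=
    h.comp Complex.measurable_re Complex.measurable_re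
  have hri : IndepFun (fun ω => (X ω).re) (fun ω => (Y ω).im) μ :=
    h.comp Complex.measurable_re Complex.measurable_im
  have hir : IndepFun (fun ω => (X ω).im) (fun ω => (Y ω).re) μ :=
    h.comp Complex.measurable_im Complex.measurable_re
  have hii : IndepFun (fun ω => (X ω).im) (fun ω => (Y ω).im) μ :=
    h.comp Complex.measurable_im Complex.measurable_im
  have err : ∫ ω, (X ω).re * (Y ω).re ∂μ = (∫ ω, (X ω).re ∂μ) * ∫ ω, (Y ω).re ∂μ :=
    hrr.integral_fun_mul_eq_mul_integral iXr.1 iYr.1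
  have eri : ∫ ω, (X ω).re * (Y ω).im ∂μ = (∫ ω, (X ω).re ∂μ) * ∫ ω, (Y ω).im ∂μ :=
    hri.integral_fun_mul_eq_mul_integral iXr.1 iYi.1
  have eir : ∫ ω, (X ω).im * (Y ω).re ∂μ = (∫ ω, (X ω).im ∂μ) * ∫ ω, (Y ω).re ∂μ :=
    hir.integral_fun_mul_eq_mul_integral iXi.1 iYr.1
  have eii : ∫ ω, (X ω).im * (Y ω).im ∂μ = (∫ ω, (X ω).im ∂μ) * ∫ ω, (Y ω).im ∂μ :=
    hii.integral_fun_mul_eq_mul_integral iXi.1 iYi.1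
  have decomp : ∀ (Z : Ω → ℂ), Measurable Z → (∀ ω, ‖Z ω‖ ≤ 1) →
      ∫ ω, Z ω ∂μ = ((∫ ω, (Z ω).re ∂μ : ℝ) : ℂ) + ((∫ ω, (Z ω).im ∂μ : ℝ) : ℂ) * Complex.I := by
    intro Z hZ hbZ
    have hiZ : Integrable Z μ :=
      (integrable_const (1:ℝ)).mono' hZ.aestronglyMeasurable (ae_of_all _ (by simpa using hbZ))
    rw [← integral_re_add_im hiZ]
    norm_num
  have hXYm : Measurable fun ω => X ω * Y ω := hX.mul hY
  have hbXY : ∀ ω, ‖X ω * Y ω‖ ≤ 1 := by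
    intro ω; rw [norm_mul]
    exact mul_le_one₀ (hbX ω) (norm_nonneg _) (hbY ω)
  rw [decomp _ hXYm hbXY, decomp _ hX hbX, decomp _ hY hbY]
  have re_eq : ∀ ω, (X ω * Y ω).re = (X ω).re * (Y ω).re - (X ω).im * (Y ω).im :=
    fun ω => Complex.mul_re _ _
  have im_eq : ∀ ω, (X ω * Y ω).im = (X ω).re * (Y ω).im + (X ω).im * (Y ω).re :=
    fun ω => Complex.mul_im _ _
  have i1 : Integrable (fun ω => (X ω).re * (Y ω).re) μ := hrr.integrable_mul iXr iYr
  have i2 : Integrable (fun ω => (X ω).im * (Y ω).im) μ := hii.integrable_mul iXi iYi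
  have i3 : Integrable (fun ω => (X ω).re * (Y ω).im) μ := hri.integrable_mul iXr iYi
  have i4 : Integrable (fun ω => (X ω).im * (Y ω).re) μ := hir.integrable_mul iXi iYr
  rw [integral_congr_ae (ae_of_all _ re_eq), integral_congr_ae (ae_of_all _ im_eq),
    integral_sub i1 i2, integral_add i3 i4, err, eri, eir, eii]
  push_cast
  ring_nf
  rw [Complex.I_sq]
  ring

lemma indep_integral_prod {ι : Type*} {F : ι → Ω → ℂ}
    (h : iIndepFun F μ) (hm : ∀ i, Measurable (F i))
    (hb : ∀ i ω, ‖F i ω‖ ≤ 1) (s : Finset ι) :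
    ∫ ω, ∏ i ∈ s, F i ω ∂μ = ∏ i ∈ s, ∫ ω, F i ω ∂μ := by
  classical
  induction s using Finset.induction with
  | empty => simp
  | insert i s hi ih =>
    rw [Finset.prod_insert hi]
    have hind : IndepFun (∏ j ∈ s, F j) (F i) μ :=
      h.indepFun_finset_prod_of_notMem hm hi
    have hprodm : Measurable (∏ j ∈ s, F j) := by
      rw [show (∏ j ∈ s, F j) = fun ω => ∏ j ∈ s, F j ω from funext fun ω => Finset.prod_apply ..]
      exact Finset.measurable_prod s fun j _ => hm j
    have hprodb : ∀ ω, ‖(∏ j ∈ s, F j) ω‖ ≤ 1 := by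
      intro ω
      rw [Finset.prod_apply, norm_prod]
      calc ∏ j ∈ s, ‖F j ω‖ ≤ ∏ j ∈ s, 1 :=
            Finset.prod_le_prod (fun j _ => norm_nonneg _) (fun j _ => hb j ω)
        _ = 1 := Finset.prod_const_one
    have hmul : ∫ ω, (∏ j ∈ s, F j) ω * F i ω ∂μ
        = (∫ ω, (∏ j ∈ s, F j) ω ∂μ) * ∫ ω, F i ω ∂μ :=
      indepFun_integral_mul_complex hind hprodm (hm i) hprodb (hb i)
    calc ∫ ω, ∏ j ∈ insert i s, F j ω ∂μ
        = ∫ ω, (∏ j ∈ s, F j) ω * F i ω ∂μ := by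
          congr 1; funext ω; rw [Finset.prod_insert hi, Finset.prod_apply, mul_comm]
      _ = (∫ ω, (∏ j ∈ s, F j) ω ∂μ) * ∫ ω, F i ω ∂μ := hmul
      _ = (∫ ω, F i ω ∂μ) * ∏ j ∈ s, ∫ ω, F j ω ∂μ := by
          rw [mul_comm]; congr 1
          rw [← ih]; congr 1; funext ω; rw [Finset.prod_apply]

end Aux

noncomputable def Efun (n : ℤ) (t : ℝ) : ℂ :=
  Complex.exp (2 * (Real.pi:ℂ) * Complex.I * (n:ℂ) * (t:ℂ))

lemma norm_Efun (n : ℤ) (t : ℝ) : ‖Efun n t‖ = 1 := by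
  rw [Efun, show 2 * (Real.pi:ℂ) * Complex.I * (n:ℂ) * (t:ℂ)
      = ((2 * Real.pi * (n:ℝ) * t : ℝ) : ℂ) * Complex.I by push_cast; ring]
  exact Complex.norm_exp_ofReal_mul_I _

lemma Efun_sum {ι : Type*} (s : Finset ι) (g : ι → ℤ) (t : ℝ) :
    Efun (∑ i ∈ s, g i) t = ∏ i ∈ s, Efun (g i) t := by
  simp only [Efun]
  rw [← Complex.exp_sum]
  congr 1
  push_cast
  rw [Finset.mul_sum, Finset.sum_mul]

lemma Efun_measurable (t : ℝ) : Measurable (fun n : ℤ => Efun n t) :=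
  measurable_from_top

lemma fourier_orth (n : ℤ) :
    ∫ t in (0:ℝ)..1, Efun n t = if n = 0 then 1 else 0 := by
  simp only [Efun]
  by_cases hn : n = 0
  · simp [hn]
  · rw [if_neg hn]
    have hc : (2 * (Real.pi:ℂ) * Complex.I * (n:ℂ)) ≠ 0 := by
      simp [Real.pi_ne_zero, Complex.I_ne_zero, hn]
    rw [show (fun t : ℝ => Complex.exp (2 * (Real.pi:ℂ) * Complex.I * (n:ℂ) * (t:ℂ)))
        = fun t : ℝ => Complex.exp ((2 * (Real.pi:ℂ) * Complex.I * (n:ℂ)) * (t:ℂ)) from rfl,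
      integral_exp_mul_complex hc]
    have h1 : Complex.exp (2 * (Real.pi:ℂ) * Complex.I * (n:ℂ) * (1:ℝ)) = 1 := by
      push_cast
      rw [mul_one]
      rw [show 2 * (Real.pi:ℂ) * Complex.I * (n:ℂ) = (n:ℂ) * (2 * (Real.pi:ℂ) * Complex.I) by ring]
      exact Complex.exp_int_mul_two_pi_mul_I n
    rw [h1]
    simp

section Inversion

variable {Ω : Type*} {mΩ : MeasurableSpace Ω} {μ : Measure Ω} [IsProbabilityMeasure μ]

lemma inversion (S : Ω → ℤ) (hS : Measurable S) (x : ℤ) :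
    ((μ {ω | S ω = x}).toReal : ℂ)
      = ∫ t in (0:ℝ)..1, ∫ ω, Efun (S ω - x) t ∂μ := by
  have hmeaset : MeasurableSet {ω | S ω = x} := hS (measurableSet_singleton x)
  set ν : Measure ℝ := volume.restrict (Set.Ioc (0:ℝ) 1) with hν
  have : IsFiniteMeasure ν := by
    constructor; rw [hν]; simp [Measure.restrict_apply]
  set f : ℝ → Ω → ℂ := fun t ω => Efun (S ω - x) t with hf
  have hjm : Measurable (Function.uncurry f) := by
    apply Complex.measurable_exp.comp
    apply Measurable.mul
    apply Measurable.mul measurable_const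
    · exact (measurable_from_top : Measurable (fun n : ℤ => (n:ℂ))).comp
        ((hS.comp measurable_snd).sub_const x)
    · exact Complex.measurable_ofReal.comp measurable_fst
  have hint : Integrable (Function.uncurry f) (ν.prod μ) := by
    refine (integrable_const (1:ℝ)).mono' hjm.aestronglyMeasurable (ae_of_all _ ?_)
    rintro ⟨t, ω⟩
    simp only [Function.uncurry_apply_pair, hf]
    exact le_of_eq (norm_Efun (S ω - x) t)
  rw [intervalIntegral.integral_of_le (by norm_num : (0:ℝ) ≤ 1)]
  rw [show ∫ t in Set.Ioc (0:ℝ) 1, ∫ ω, f t ω ∂μ ∂volume = ∫ t, ∫ ω, f t ω ∂μ ∂ν from rfl]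
  rw [integral_integral_swap hint]
  have inner : ∀ ω, ∫ t, f t ω ∂ν = if S ω = x then 1 else 0 := by
    intro ω
    have := fourier_orth (S ω - x)
    rw [intervalIntegral.integral_of_le (by norm_num : (0:ℝ) ≤ 1)] at this
    rw [show ∫ t, f t ω ∂ν = ∫ t in Set.Ioc (0:ℝ) 1, Efun (S ω - x) t ∂volume from rfl, this]
    simp [sub_eq_zero]
  rw [integral_congr_ae (ae_of_all _ inner)]
  rw [show (fun ω => if S ω = x then (1:ℂ) else 0)
      = Set.indicator {ω | S ω = x} (fun _ => (1:ℂ)) from by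
    funext ω; rw [Set.indicator_apply]; rfl]
  rw [integral_indicator_const _ hmeaset]
  simp
  rfl

end Inversion

lemma one_sub_cos_two (x : ℝ) : 1 - Real.cos (2 * x) = 2 * Real.sin x ^ 2 := by
  have h := Real.cos_two_mul x
  have h2 := Real.sin_sq_add_cos_sq x
  nlinarith

lemma sin_pi_mul_ge {t : ℝ} (h0 : 0 ≤ t) (h1 : t ≤ 1/2) : 2 * t ≤ Real.sin (Real.pi * t) := by
  have := Real.mul_le_sin (x := Real.pi * t) (by positivity)
    (by nlinarith [Real.pi_pos])
  calc 2 * t = 2 / Real.pi * (Real.pi * t) := by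
        field_simp
    _ ≤ Real.sin (Real.pi * t) := this

lemma gauss_tail (c : ℝ) (hc : 0 < c) :
    ∫ t in (0:ℝ)..(1/2), Real.exp (-(8*c) * t^2) ≤ Real.sqrt (Real.pi / (8*c)) := by
  have h8 : (0:ℝ) < 8*c := by linarith
  have hint : Integrable (fun t : ℝ => Real.exp (-(8*c) * t^2)) := by
    simpa using integrable_exp_neg_mul_sq h8
  rw [intervalIntegral.integral_of_le (by norm_num : (0:ℝ) ≤ 1/2)]
  calc ∫ t in Set.Ioc (0:ℝ) (1/2), Real.exp (-(8*c) * t^2)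
      ≤ ∫ t : ℝ, Real.exp (-(8*c) * t^2) :=
        setIntegral_le_integral hint (ae_of_all _ fun t => (Real.exp_pos _).le)
    _ = Real.sqrt (Real.pi / (8*c)) := integral_gaussian (8*c)

lemma gauss_bound (c : ℝ) (hc : 0 < c) :
    ∫ t in (0:ℝ)..1, Real.exp (-(c * (1 - Real.cos (2*Real.pi*t))))
      ≤ 2 * Real.sqrt (Real.pi / (8*c)) := by
  have hcont : Continuous fun t : ℝ => Real.exp (-(c * (1 - Real.cos (2*Real.pi*t)))) := by
    continuity
  have hcont2 : Continuous fun t : ℝ => Real.exp (-(8*c) * t^2) := by continuity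
  have hcont3 : Continuous fun t : ℝ => Real.exp (-(8*c) * (1-t)^2) := by continuity
  have hsplit : ∫ t in (0:ℝ)..1, Real.exp (-(c * (1 - Real.cos (2*Real.pi*t))))
      = (∫ t in (0:ℝ)..(1/2), Real.exp (-(c * (1 - Real.cos (2*Real.pi*t)))))
      + ∫ t in (1/2:ℝ)..1, Real.exp (-(c * (1 - Real.cos (2*Real.pi*t)))) := by
    rw [intervalIntegral.integral_add_adjacent_intervals
      (hcont.intervalIntegrable _ _) (hcont.intervalIntegrable _ _)]
  have key1 : ∀ t ∈ Set.Icc (0:ℝ) (1/2),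
      Real.exp (-(c * (1 - Real.cos (2*Real.pi*t)))) ≤ Real.exp (-(8*c) * t^2) := by
    rintro t ⟨h0, h1⟩
    apply Real.exp_le_exp.2
    have hs := sin_pi_mul_ge h0 h1
    have heq : 1 - Real.cos (2*Real.pi*t) = 2 * Real.sin (Real.pi*t) ^ 2 := by
      rw [show 2*Real.pi*t = 2*(Real.pi*t) by ring, one_sub_cos_two]
    rw [heq]
    have hsq : (2*t)^2 ≤ Real.sin (Real.pi*t)^2 := pow_le_pow_left₀ (by linarith) hs 2
    nlinarith [mul_le_mul_of_nonneg_left hsq hc.le]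
  have key2 : ∀ t ∈ Set.Icc (1/2:ℝ) 1,
      Real.exp (-(c * (1 - Real.cos (2*Real.pi*t)))) ≤ Real.exp (-(8*c) * (1-t)^2) := by
    rintro t ⟨h0, h1⟩
    apply Real.exp_le_exp.2
    have hs : 2 * (1-t) ≤ Real.sin (Real.pi * (1-t)) :=
      sin_pi_mul_ge (by linarith) (by linarith)
    have hsin : Real.sin (Real.pi * t) = Real.sin (Real.pi * (1-t)) := by
      rw [show Real.pi * (1-t) = Real.pi - Real.pi * t by ring, Real.sin_pi_sub]
    have heq : 1 - Real.cos (2*Real.pi*t) = 2 * Real.sin (Real.pi*t) ^ 2 := by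
      rw [show 2*Real.pi*t = 2*(Real.pi*t) by ring, one_sub_cos_two]
    rw [heq, hsin]
    have hsq : (2*(1-t))^2 ≤ Real.sin (Real.pi*(1-t))^2 := pow_le_pow_left₀ (by linarith) hs 2
    nlinarith [mul_le_mul_of_nonneg_left hsq hc.le]
  have p1 : ∫ t in (0:ℝ)..(1/2), Real.exp (-(c * (1 - Real.cos (2*Real.pi*t))))
      ≤ Real.sqrt (Real.pi / (8*c)) := by
    calc _ ≤ ∫ t in (0:ℝ)..(1/2), Real.exp (-(8*c) * t^2) :=
          intervalIntegral.integral_mono_on (by norm_num)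
            (hcont.intervalIntegrable _ _) (hcont2.intervalIntegrable _ _) key1
      _ ≤ _ := gauss_tail c hc
  have p2 : ∫ t in (1/2:ℝ)..1, Real.exp (-(c * (1 - Real.cos (2*Real.pi*t))))
      ≤ Real.sqrt (Real.pi / (8*c)) := by
    have step : ∫ t in (1/2:ℝ)..1, Real.exp (-(8*c) * (1-t)^2)
        = ∫ t in (0:ℝ)..(1/2), Real.exp (-(8*c) * t^2) := by
      have := intervalIntegral.integral_comp_sub_left (a := (1/2:ℝ)) (b := 1)
        (fun u => Real.exp (-(8*c) * u^2)) 1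
      norm_num at this ⊢
      convert this using 2 <;> norm_num
    calc _ ≤ ∫ t in (1/2:ℝ)..1, Real.exp (-(8*c) * (1-t)^2) :=
          intervalIntegral.integral_mono_on (by norm_num)
            (hcont.intervalIntegrable _ _) (hcont3.intervalIntegrable _ _) key2
      _ = ∫ t in (0:ℝ)..(1/2), Real.exp (-(8*c) * t^2) := step
      _ ≤ _ := gauss_tail c hc
  rw [hsplit]; linarith


lemma final_arith {q : ℝ} (hq : 0 < q) {m r : ℕ} (hm : 0 < m) (hr : 0 < r) :
    2 * Real.sqrt (Real.pi / (8 * (2*q*m/r))) ≤ 1 * Real.sqrt r / Real.sqrt (q*m) := by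
  have hqm : (0:ℝ) < q * m := by positivity
  have hrpos : (0:ℝ) < r := by exact_mod_cast hr
  have harg : Real.pi / (8 * (2*q*m/r)) = (Real.pi/16) * ((r:ℝ) / (q*m)) := by
    field_simp; ring
  rw [harg, Real.sqrt_mul (by positivity), Real.sqrt_div (by positivity : (0:ℝ) ≤ (r:ℝ)) (q*m)]
  have hπ : Real.sqrt (Real.pi/16) ≤ 1/2 := by
    have h1 : Real.pi/16 ≤ 1/4 := by nlinarith [Real.pi_le_four]
    calc Real.sqrt (Real.pi/16) ≤ Real.sqrt (1/4) := Real.sqrt_le_sqrt h1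
      _ = 1/2 := by
        rw [show (1/4:ℝ) = (1/2)^2 by norm_num, Real.sqrt_sq (by norm_num)]
  have hnn : (0:ℝ) ≤ Real.sqrt r / Real.sqrt (q*m) := by positivity
  have := mul_le_mul_of_nonneg_right hπ hnn
  calc 2 * (Real.sqrt (Real.pi/16) * (Real.sqrt r / Real.sqrt (q*m)))
      ≤ 2 * (1/2 * (Real.sqrt r / Real.sqrt (q*m))) := by linarith
    _ = 1 * Real.sqrt r / Real.sqrt (q*m) := by ring


theorem stmt_7 :
    ∃ C : ℝ, 0 < C ∧
      ∀ (r : ℕ), 0 < r → ∀ (q : ℝ), 0 < q → q < 1 → ∀ (m : ℕ) (hm : 0 < m),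
      ∀ {Ω : Type} [MeasurableSpace Ω] (μ : Measure Ω) [IsProbabilityMeasure μ]
        (a : Fin m → Ω → ℤ),
        (∀ i, Measurable (a i)) →
        -- the `a i` are independent
        iIndepFun a μ →
        -- and identically distributed
        (∀ i, Measure.map (a i) μ = Measure.map (a ⟨0, hm⟩) μ) →
        -- there is a symmetric `β` supported on `{-1,0,1}` with `P(β=1)=P(β=-1) ≥ q`
        -- such that `|E[exp(2πi a t)]|^r ≤ E[exp(2πi β t)]` for all real `t`
        (∃ β : PMF ℤ,
          (∀ x : ℤ, x ∉ ({-1, 0, 1} : Set ℤ) → β x = 0) ∧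
          β 1 = β (-1) ∧
          ENNReal.ofReal q ≤ β 1 ∧
          ∀ t : ℝ,
            ‖∫ ω, Complex.exp
                (2 * (Real.pi : ℂ) * Complex.I * (a ⟨0, hm⟩ ω : ℂ) * (t : ℂ)) ∂μ‖ ^ r ≤
              ∑' x : ℤ, (β x).toReal * Real.cos (2 * Real.pi * (x : ℝ) * t)) →
        ∀ x : ℤ,
          (μ {ω | (∑ i, a i ω) = x}).toReal ≤
            C * Real.sqrt r / Real.sqrt (q * m) := by
  refine ⟨1, one_pos, ?_⟩
  intro r hr q hq0 hq1 m hm Ω _ μ _ a hmeas hindep hident hβ x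
  obtain ⟨β, hsupp, hsymm, hqβ, hchar⟩ := hβ
  set a0 : Ω → ℤ := a ⟨0, hm⟩ with ha0
  set S : Ω → ℤ := fun ω => ∑ i, a i ω with hSdef
  have hS : Measurable S := Finset.measurable_sum _ (fun i _ => hmeas i)
  set φ : ℝ → ℂ := fun t => ∫ ω, Efun (a0 ω) t ∂μ with hφ
  set θ : ℝ → ℝ := fun t => 1 - Real.cos (2*Real.pi*t) with hθ
  have hθ0 : ∀ t, 0 ≤ θ t := fun t => by
    simp only [hθ, sub_nonneg]; exact Real.cos_le_one _
  -- basic facts about β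
  have b1top : β 1 ≠ ⊤ := PMF.apply_ne_top β 1
  set b1 : ℝ := (β 1).toReal with hb1
  set b0 : ℝ := (β 0).toReal with hb0
  have hq_b1 : q ≤ b1 := by
    have := ENNReal.toReal_mono b1top hqβ
    rwa [ENNReal.toReal_ofReal hq0.le] at this
  have hsum : b0 + 2*b1 ≤ 1 := by
    have hle : β (-1) + (β 0 + β 1) ≤ 1 := by
      have h := Summable.sum_le_tsum (f := fun y : ℤ => β y) ({-1,0,1} : Finset ℤ) (fun _ _ => zero_le) ENNReal.summable
      rw [β.tsum_coe] at h
      calc β (-1) + (β 0 + β 1)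
          = ∑ y ∈ ({-1,0,1} : Finset ℤ), β y := by
            rw [show ({-1,0,1} : Finset ℤ) = insert (-1) (insert 0 {1}) from rfl,
              Finset.sum_insert (by norm_num), Finset.sum_insert (by norm_num),
              Finset.sum_singleton]
        _ ≤ 1 := h
    have h2 := ENNReal.toReal_mono ENNReal.one_ne_top hle
    rw [ENNReal.toReal_add (PMF.apply_ne_top β _)
        (ENNReal.add_ne_top.2 ⟨PMF.apply_ne_top β _, PMF.apply_ne_top β _⟩),
      ENNReal.toReal_add (PMF.apply_ne_top β _) (PMF.apply_ne_top β _),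
      ENNReal.toReal_one] at h2
    have hsymm' : (β (-1)).toReal = b1 := by rw [← hsymm]
    linarith
  -- the tsum
  have htsum : ∀ t, (∑' y : ℤ, (β y).toReal * Real.cos (2*Real.pi*(y:ℝ)*t))
      = b0 + 2*b1*Real.cos (2*Real.pi*t) := by
    intro t
    have hvan : ∀ y : ℤ, y ∉ ({-1,0,1} : Finset ℤ) →
        (β y).toReal * Real.cos (2*Real.pi*(y:ℝ)*t) = 0 := by
      intro y hy
      have : y ∉ ({-1, 0, 1} : Set ℤ) := by
        simpa using hy
      rw [hsupp y this]; simp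
    rw [tsum_eq_sum hvan]
    rw [show ({-1,0,1} : Finset ℤ) = insert (-1) (insert 0 {1}) from rfl,
      Finset.sum_insert (by norm_num), Finset.sum_insert (by norm_num),
      Finset.sum_singleton]
    have hsymm' : (β (-1)).toReal = b1 := by rw [← hsymm]
    rw [hsymm']
    push_cast
    rw [show 2*Real.pi*(-1)*t = -(2*Real.pi*t) by ring, Real.cos_neg]
    norm_num
    ring
  -- characteristic function bound
  have hφ_bound : ∀ t, ‖φ t‖ ≤ Real.exp (-(2*q*(θ t))/r) := by
    intro t
    have h1 : ‖φ t‖^r ≤ b0 + 2*b1*Real.cos (2*Real.pi*t) := by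
      have := hchar t
      rwa [htsum t] at this
    have h2 : b0 + 2*b1*Real.cos (2*Real.pi*t) ≤ 1 - 2*q*(θ t) := by
      have h3 := mul_le_mul_of_nonneg_right hq_b1 (hθ0 t)
      simp only [hθ] at *
      nlinarith
    have h3 : 1 - 2*q*(θ t) ≤ Real.exp (-(2*q*(θ t))) := by
      have := Real.add_one_le_exp (-(2*q*(θ t)))
      linarith
    apply le_of_pow_le_pow_left₀ hr.ne' (Real.exp_pos _).le
    rw [← Real.exp_nat_mul]
    calc ‖φ t‖^r ≤ 1 - 2*q*(θ t) := le_trans h1 h2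
      _ ≤ Real.exp (-(2*q*(θ t))) := h3
      _ = Real.exp ((r:ℝ) * (-(2*q*(θ t))/r)) := by
          congr 1
          have : (r:ℝ) ≠ 0 := by exact_mod_cast hr.ne'
          field_simp
  -- product structure
  have hprod : ∀ t, ∫ ω, Efun (S ω) t ∂μ = (φ t)^m := by
    intro t
    have hF : iIndepFun
        (fun i => (fun n : ℤ => Efun n t) ∘ a i) μ :=
      hindep.comp _ (fun i => Efun_measurable t)
    have heq : (fun ω => Efun (S ω) t) = fun ω => ∏ i, Efun (a i ω) t := by
      funext ω; exact Efun_sum Finset.univ (fun i => a i ω) t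
    rw [show ∫ ω, Efun (S ω) t ∂μ = ∫ ω, ∏ i, Efun (a i ω) t ∂μ from by rw [heq]]
    rw [indep_integral_prod (F := fun i (ω : Ω) => Efun (a i ω) t) hF
      (fun i => (Efun_measurable t).comp (hmeas i))
      (fun i ω => le_of_eq (norm_Efun _ _)) Finset.univ]
    have hfac : ∀ i : Fin m, ∫ ω, Efun (a i ω) t ∂μ = φ t := by
      intro i
      have hg : Measurable (fun n : ℤ => Efun n t) := Efun_measurable t
      rw [hφ, ha0]
      rw [← integral_map (hmeas i).aemeasurable hg.aestronglyMeasurable, hident i,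
        integral_map (hmeas ⟨0,hm⟩).aemeasurable hg.aestronglyMeasurable]
    rw [Finset.prod_congr rfl (fun i _ => hfac i), Finset.prod_const,
      Finset.card_univ, Fintype.card_fin]
  -- inversion + norm bound
  set c : ℝ := 2*q*m/r with hc
  have hcpos : 0 < c := by
    have h1 : (0:ℝ) < m := by exact_mod_cast hm
    have h2 : (0:ℝ) < r := by exact_mod_cast hr
    rw [hc]; positivity
  have hpt : ∀ t : ℝ, ‖∫ ω, Efun (S ω - x) t ∂μ‖ ≤ Real.exp (-(c * θ t)) := by
    intro t
    have hshift : ∀ ω, Efun (S ω - x) t = Efun (S ω) t * Efun (-x) t := by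
      intro ω
      simp only [Efun, ← Complex.exp_add]
      congr 1
      push_cast
      ring
    rw [integral_congr_ae (ae_of_all _ hshift), integral_mul_const, norm_mul,
      norm_Efun, mul_one, hprod t, norm_pow]
    calc ‖φ t‖^m ≤ (Real.exp (-(2*q*(θ t))/r))^m :=
          pow_le_pow_left₀ (norm_nonneg _) (hφ_bound t) m
      _ = Real.exp (-(c * θ t)) := by
          rw [← Real.exp_nat_mul]
          congr 1
          rw [hc]
          ring
  -- integrability of the norm of the inner integral
  have hjm : Measurable (Function.uncurry fun (t:ℝ) (ω:Ω) => Efun (S ω - x) t) := by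
    apply Complex.measurable_exp.comp
    apply Measurable.mul
    apply Measurable.mul measurable_const
    · exact (measurable_from_top : Measurable (fun n : ℤ => (n:ℂ))).comp
        ((hS.comp measurable_snd).sub_const x)
    · exact Complex.measurable_ofReal.comp measurable_fst
  have hmeasΦ : StronglyMeasurable fun t => ∫ ω, Efun (S ω - x) t ∂μ :=
    hjm.stronglyMeasurable.integral_prod_right'
  have hbddΦ : ∀ t : ℝ, ‖∫ ω, Efun (S ω - x) t ∂μ‖ ≤ 1 := by
    intro t
    calc ‖∫ ω, Efun (S ω - x) t ∂μ‖
        ≤ 1 * (μ Set.univ).toReal :=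
          norm_integral_le_of_norm_le_const (ae_of_all _ fun ω => le_of_eq (norm_Efun _ _))
      _ = 1 := by simp
  have hII : IntervalIntegrable (fun t => ‖∫ ω, Efun (S ω - x) t ∂μ‖) volume 0 1 := by
    rw [intervalIntegrable_iff]
    apply Measure.integrableOn_of_bounded (M := 1) (by simp)
      hmeasΦ.norm.aestronglyMeasurable
    refine ae_of_all _ fun t => ?_
    rw [Real.norm_eq_abs, abs_of_nonneg (norm_nonneg _)]
    exact hbddΦ t
  have hGII : IntervalIntegrable (fun t => Real.exp (-(c * θ t))) volume 0 1 := by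
    apply Continuous.intervalIntegrable
    simp only [hθ]
    fun_prop
  -- main chain
  have step0 : (μ {ω | S ω = x}).toReal
      ≤ ∫ t in (0:ℝ)..1, ‖∫ ω, Efun (S ω - x) t ∂μ‖ := by
    have h := inversion (μ := μ) S hS x
    have heq : (μ {ω | S ω = x}).toReal = ‖((μ {ω | S ω = x}).toReal : ℂ)‖ := by
      rw [Complex.norm_real, Real.norm_eq_abs, abs_of_nonneg ENNReal.toReal_nonneg]
    rw [heq, h]
    exact intervalIntegral.norm_integral_le_integral_norm (by norm_num)
  have step1 : ∫ t in (0:ℝ)..1, ‖∫ ω, Efun (S ω - x) t ∂μ‖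
      ≤ ∫ t in (0:ℝ)..1, Real.exp (-(c * θ t)) :=
    intervalIntegral.integral_mono_on (by norm_num) hII hGII (fun t _ => hpt t)
  have step2 : ∫ t in (0:ℝ)..1, Real.exp (-(c * θ t)) ≤ 2 * Real.sqrt (Real.pi / (8*c)) := by
    simpa only [hθ] using gauss_bound c hcpos
  calc (μ {ω | S ω = x}).toReal
      ≤ ∫ t in (0:ℝ)..1, ‖∫ ω, Efun (S ω - x) t ∂μ‖ := step0
    _ ≤ ∫ t in (0:ℝ)..1, Real.exp (-(c * θ t)) := step1
    _ ≤ 2 * Real.sqrt (Real.pi / (8*c)) := step2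
    _ ≤ 1 * Real.sqrt r / Real.sqrt (q * m) := by
        rw [hc]; exact final_arith hq0 hm hr
end

section
/- For all positive integers ℓ and K, ∫₀¹ (∑_{j=1}^{K} cos(2πjt))^ℓ dt ≤ (1 - 2^{-(ℓ-1)})·K^{ℓ-1}. -/
/-!
For `ℓ = 1` the integral vanishes. For `ℓ ≥ 2`, write `S` for the cosine sum: `|S| ≤ K` gives
`S ^ ℓ ≤ K ^ (ℓ - 2) * S ^ 2`, and by orthogonality `∫₀¹ S ^ 2 = K / 2`, so the integral is at most
`K ^ (ℓ - 1) / 2`, which is below the claimed bound since `2 ^ (-(ℓ - 1)) ≤ 1 / 2`.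
-/

open Real

theorem integral_cos_two_pi_int_mul (n : ℤ) :
    ∫ t in (0 : ℝ)..1, cos (2 * π * n * t) = if n = 0 then 1 else 0 := by
  split_ifs with hn
  · simp [hn]
  · have hc : 2 * π * n ≠ 0 := by simp [pi_ne_zero, hn]
    rw [intervalIntegral.integral_comp_mul_left (fun x => cos x) hc, integral_cos, mul_one,
      show 2 * π * n = ((2 * n : ℤ) : ℝ) * π by push_cast; ring, sin_int_mul_pi]
    simp

theorem integral_cos_mul_cos_two_pi (i j : ℕ) (hi : 0 < i) :
    ∫ t in (0 : ℝ)..1, cos (2 * π * i * t) * cos (2 * π * j * t) = if i = j then 1 / 2 else 0 := by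
  have product_to_sum : ∀ t : ℝ, cos (2 * π * i * t) * cos (2 * π * j * t) =
      (cos (2 * π * ((i - j : ℤ) : ℝ) * t) + cos (2 * π * ((i + j : ℤ) : ℝ) * t)) / 2 := by
    intro t
    push_cast
    rw [show 2 * π * (i - j) * t = 2 * π * i * t - 2 * π * j * t by ring,
      show 2 * π * (i + j) * t = 2 * π * i * t + 2 * π * j * t by ring, cos_sub, cos_add]
    ring
  have integrable (n : ℤ) :
      IntervalIntegrable (fun t => cos (2 * π * n * t)) MeasureTheory.volume 0 1 :=
    Continuous.intervalIntegrable (by fun_prop) _ _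
  simp_rw [product_to_sum]
  rw [intervalIntegral.integral_div, intervalIntegral.integral_add (integrable _) (integrable _),
    integral_cos_two_pi_int_mul, integral_cos_two_pi_int_mul,
    if_neg (show (i + j : ℤ) ≠ 0 by omega)]
  simp only [sub_eq_zero, Nat.cast_inj]
  split_ifs <;> norm_num

theorem pow_add_two_le_of_abs_le {x c : ℝ} (h : |x| ≤ c) (m : ℕ) : x ^ (m + 2) ≤ c ^ m * x ^ 2 := by
  have hxm : x ^ m ≤ c ^ m := calc
    x ^ m ≤ |x| ^ m := (le_abs_self _).trans (abs_pow x m).le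
    _ ≤ c ^ m := pow_le_pow_left₀ (abs_nonneg x) h m
  rw [pow_add]
  exact mul_le_mul_of_nonneg_right hxm (sq_nonneg x)

theorem half_le_one_sub_two_zpow_neg {ℓ : ℕ} (hℓ : 2 ≤ ℓ) :
    1 / 2 ≤ 1 - (2 : ℝ) ^ (-((ℓ : ℤ) - 1)) := by
  have : (2 : ℝ) ^ (-((ℓ : ℤ) - 1)) ≤ 2 ^ (-1 : ℤ) :=
    zpow_le_zpow_right₀ (by norm_num) (by omega)
  norm_num at this ⊢
  linarith

noncomputable def cosSum (K : ℕ) (t : ℝ) : ℝ := ∑ j ∈ Finset.Icc 1 K, cos (2 * π * j * t)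

namespace cosSum

variable (K : ℕ)

theorem continuous : Continuous (cosSum K) := by
  unfold cosSum
  fun_prop

theorem abs_le (t : ℝ) : |cosSum K t| ≤ K := calc
  |cosSum K t| ≤ ∑ j ∈ Finset.Icc 1 K, |cos (2 * π * j * t)| := Finset.abs_sum_le_sum_abs _ _
  _ ≤ ∑ _j ∈ Finset.Icc 1 K, (1 : ℝ) := Finset.sum_le_sum fun j _ => abs_cos_le_one _
  _ = K := by simp

theorem integral : ∫ t in (0 : ℝ)..1, cosSum K t = 0 := by
  unfold cosSum
  rw [intervalIntegral.integral_finsetSum fun j _ =>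
    Continuous.intervalIntegrable (by fun_prop) _ _]
  refine Finset.sum_eq_zero fun j hj => ?_
  have hj0 : j ≠ 0 := by have := (Finset.mem_Icc.mp hj).1; omega
  simpa [hj0] using integral_cos_two_pi_int_mul j

theorem integral_sq : ∫ t in (0 : ℝ)..1, cosSum K t ^ 2 = K / 2 := by
  simp_rw [cosSum, sq, Finset.sum_mul_sum]
  rw [intervalIntegral.integral_finsetSum fun i _ =>
    Continuous.intervalIntegrable (by fun_prop) _ _]
  have diagonal (i) (hi : i ∈ Finset.Icc 1 K) : ∫ t in (0 : ℝ)..1, ∑ j ∈ Finset.Icc 1 K,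
      cos (2 * π * i * t) * cos (2 * π * j * t) = 1 / 2 := by
    rw [intervalIntegral.integral_finsetSum fun j _ =>
      Continuous.intervalIntegrable (by fun_prop) _ _]
    simp_rw [integral_cos_mul_cos_two_pi i _ (Finset.mem_Icc.mp hi).1]
    rw [Finset.sum_ite_eq, if_pos hi]
  rw [Finset.sum_congr rfl diagonal]
  simp [div_eq_mul_inv]

theorem integral_pow_add_two_le (m : ℕ) :
    ∫ t in (0 : ℝ)..1, cosSum K t ^ (m + 2) ≤ K ^ (m + 1) / 2 := calc
  _ ≤ ∫ t in (0 : ℝ)..1, (K : ℝ) ^ m * cosSum K t ^ 2 :=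
    intervalIntegral.integral_mono_on zero_le_one
      (((continuous K).pow _).intervalIntegrable _ _)
      ((continuous_const.mul ((continuous K).pow 2)).intervalIntegrable _ _)
      fun t _ => pow_add_two_le_of_abs_le (abs_le K t) m
  _ = K ^ (m + 1) / 2 := by
    rw [intervalIntegral.integral_const_mul, integral_sq]
    ring

end cosSum

theorem stmt_8_general (ℓ K : ℕ) (hℓ : 1 ≤ ℓ) :
    (∫ t in (0 : ℝ)..1, (∑ j ∈ Finset.Icc 1 K, Real.cos (2 * Real.pi * (j : ℝ) * t)) ^ ℓ) ≤
      (1 - (2 : ℝ) ^ (-((ℓ : ℤ) - 1))) * (K : ℝ) ^ (ℓ - 1) := by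
  change ∫ t in (0 : ℝ)..1, cosSum K t ^ ℓ ≤ _
  obtain rfl | ⟨m, rfl⟩ : ℓ = 1 ∨ ∃ m, ℓ = m + 2 := by
    rcases Nat.lt_or_ge ℓ 2 with h | h
    · exact .inl (by omega)
    · exact .inr ⟨ℓ - 2, by omega⟩
  · simp [cosSum.integral]
  · calc ∫ t in (0 : ℝ)..1, cosSum K t ^ (m + 2)
        ≤ 1 / 2 * (K : ℝ) ^ (m + 1) := by linarith [cosSum.integral_pow_add_two_le K m]
      _ ≤ _ := mul_le_mul_of_nonneg_right (half_le_one_sub_two_zpow_neg (by omega)) (by positivity)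

theorem stmt_8 (ℓ K : ℕ) (hℓ : 1 ≤ ℓ) (hK : 1 ≤ K) :
    (∫ t in (0 : ℝ)..1, (∑ j ∈ Finset.Icc 1 K, Real.cos (2 * Real.pi * (j : ℝ) * t)) ^ ℓ) ≤
      (1 - (2 : ℝ) ^ (-((ℓ : ℤ) - 1))) * (K : ℝ) ^ (ℓ - 1) :=
  stmt_8_general ℓ K hℓ
end

section
/- Fix a natural number a > 1 and a constant c > 0. There exist a constant C > 0 and an integer d₀ such that for every integer d ≥ d₀ and every integer K with c·d < K ≤ d^{a-1}, if f is a uniformly random polynomial from P_{d,K}, then the probability that there exists an integer n ≥ 1 such that the n-th cyclotomic polynomial Φ_n has degree at most √d/(log d)² and Φ_n divides f in ℤ[x] is at most C/K. -/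
/-!
A union bound over `n`. If `φ n ≤ √d` then `n ≤ 2 φ(n)² ≤ 2d`, so only `Φ_1, …, Φ_{2d}` matter.
Two polynomials of `P_{d,K}` divisible by `p` and with the same coefficients in degrees
`≥ deg p` differ by a multiple of `p` of smaller degree, hence coincide; so at most
`(2K+1)^(d - φ n)` of them are divisible by `Φ_n`. Since `φ n ≥ 2` for `n ≥ 3`, this gives at most
`(2(2K+1) + 2d)(2K+1)^(d-2)` bad polynomials, against `|P_{d,K}| ≥ K (2K+1)^(d-1)`; the ratio is
`O((1 + d/K)/K)`, which is `O(1/K)` as `K > c d`.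
-/

open Polynomial

/-- `PdK d K` is the set of monic integer polynomials of degree `d` with all
coefficients bounded by `K` in absolute value and nonzero constant term. -/
def PdK (d K : ℕ) : Set (Polynomial ℤ) :=
  {f | f.Monic ∧ f.natDegree = d ∧ f.coeff 0 ≠ 0 ∧ ∀ i < d, |f.coeff i| ≤ (K : ℤ)}

namespace Nat

/- The factor `n.gcd 2` is multiplicative on coprime factors and pays for the prime `2`,
the only one for which `p ^ k ≤ φ (p ^ k) ^ 2` fails. -/
lemma le_gcd_two_mul_totient_sq (n : ℕ) : n ≤ n.gcd 2 * φ n ^ 2 := by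
  induction n using Nat.recOnPosPrimePosCoprime with
  | zero => simp
  | one => simp
  | prime_pow p k hp hk =>
    obtain ⟨j, rfl⟩ := Nat.exists_eq_add_of_lt hk
    rw [zero_add, totient_prime_pow_succ hp, mul_pow, ← pow_mul, pow_succ]
    rcases hp.eq_two_or_odd' with rfl | hodd
    · have : 2 ^ j ≤ 2 ^ (j * 2) := Nat.pow_le_pow_right two_pos (by omega)
      simp only [Nat.gcd_mul_left_left, Nat.add_one_sub_one, one_pow, mul_one]
      omega
    · have hp3 : 3 ≤ p := by
        have := hp.two_le
        rcases hodd with ⟨m, rfl⟩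
        omega
      have hpow : p ^ j ≤ p ^ (j * 2) := Nat.pow_le_pow_right hp.pos (by omega)
      have hsq : p ≤ (p - 1) ^ 2 := by
        obtain ⟨q, rfl⟩ := Nat.exists_eq_add_of_le hp3
        rw [show 3 + q - 1 = q + 2 by omega]
        nlinarith
      calc p ^ j * p ≤ p ^ (j * 2) * (p - 1) ^ 2 := Nat.mul_le_mul hpow hsq
        _ ≤ _ := Nat.le_mul_of_pos_left _ (Nat.gcd_pos_of_pos_right _ two_pos)
  | coprime a b _ _ hab iha ihb =>
    rw [totient_mul hab, Nat.gcd_comm, hab.gcd_mul, Nat.gcd_comm 2, Nat.gcd_comm 2]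
    calc a * b ≤ (a.gcd 2 * φ a ^ 2) * (b.gcd 2 * φ b ^ 2) := Nat.mul_le_mul iha ihb
      _ = _ := by ring

lemma le_two_mul_totient_sq (n : ℕ) : n ≤ 2 * φ n ^ 2 :=
  (le_gcd_two_mul_totient_sq n).trans (Nat.mul_le_mul_right _ (Nat.gcd_le_right (m := n) two_pos))

end Nat

lemma Set.ncard_biUnion_le {ι α : Type*} (s : Finset ι) (A : ι → Set α) :
    (⋃ i ∈ s, A i).ncard ≤ ∑ i ∈ s, (A i).ncard := by
  have := Set.ncard_iUnion_le_of_fintype fun i : s => A i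
  rwa [Set.iUnion_subtype, Finset.sum_coe_sort s fun i => (A i).ncard] at this

lemma Polynomial.eq_of_dvd_sub_of_coeff_eq {R : Type*} [Ring R] [NoZeroDivisors R] {p f g : R[X]}
    (hdvd : p ∣ f - g) (hcoeff : ∀ i, p.natDegree ≤ i → f.coeff i = g.coeff i) : f = g := by
  rcases eq_or_ne p 0 with rfl | hp
  · exact sub_eq_zero.1 (zero_dvd_iff.1 hdvd)
  refine sub_eq_zero.1 (eq_zero_of_dvd_of_degree_lt hdvd ?_)
  rw [degree_eq_natDegree hp, degree_lt_iff_coeff_zero]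
  intro i hi
  rw [coeff_sub, hcoeff i hi, sub_self]

lemma Polynomial.coeff_X_pow_add_ofFn {R : Type*} [Semiring R] [DecidableEq R] {d : ℕ}
    (v : Fin d → R) {i : ℕ} (hi : i < d) : (X ^ d + ofFn d v).coeff i = v ⟨i, hi⟩ := by
  rw [coeff_add, coeff_X_pow, if_neg hi.ne, zero_add, ofFn_coeff_eq_val_of_lt v hi]

section CoeffBox

variable {S : Set ℤ[X]} {m t K : ℕ}

lemma mapsTo_coeffs_Icc (hbound : ∀ f ∈ S, ∀ i < t, |f.coeff (m + i)| ≤ K) :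
    Set.MapsTo (fun f (i : Fin t) => f.coeff (m + i)) S
      (Finset.Icc (fun _ => -(K : ℤ)) fun _ => (K : ℤ) : Finset (Fin t → ℤ)) := fun f hf => by
  simpa [Pi.le_def, ← forall_and, ← abs_le] using fun i : Fin t => hbound f hf i i.2

lemma finite_of_injOn_coeffs (hbound : ∀ f ∈ S, ∀ i < t, |f.coeff (m + i)| ≤ K)
    (hinj : S.InjOn fun f (i : Fin t) => f.coeff (m + i)) : S.Finite :=
  .of_finite_image ((Finset.finite_toSet _).subset (mapsTo_coeffs_Icc hbound).image_subset) hinj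

lemma ncard_le_of_injOn_coeffs (hbound : ∀ f ∈ S, ∀ i < t, |f.coeff (m + i)| ≤ K)
    (hinj : S.InjOn fun f (i : Fin t) => f.coeff (m + i)) : S.ncard ≤ (2 * K + 1) ^ t := by
  refine (Set.ncard_le_ncard_of_injOn _ (mapsTo_coeffs_Icc hbound) hinj).trans_eq ?_
  rw [Set.ncard_coe_finset, Pi.card_Icc, Finset.prod_const, Finset.card_univ, Fintype.card_fin,
    Int.card_Icc]
  congr 1
  omega

end CoeffBox

lemma sum_Icc_pow_sub_totient_le {Q : ℕ} (hQ : 0 < Q) {d : ℕ} (hd : 2 ≤ d) (m : ℕ) :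
    ∑ n ∈ Finset.Icc 1 m, Q ^ (d - n.totient) ≤ (2 * Q + m) * Q ^ (d - 2) := by
  have hsplit : Finset.Icc 1 m ⊆ {1, 2} ∪ Finset.Icc 3 m := fun n hn => by
    simp only [Finset.mem_Icc, Finset.mem_union, Finset.mem_insert, Finset.mem_singleton] at hn ⊢
    omega
  have hdisj : Disjoint ({1, 2} : Finset ℕ) (Finset.Icc 3 m) := by
    simp [Finset.disjoint_left]
  have hlarge : ∀ n ∈ Finset.Icc 3 m, Q ^ (d - n.totient) ≤ Q ^ (d - 2) := fun n hn => by
    obtain ⟨hn3, -⟩ := Finset.mem_Icc.1 hn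
    have heven := Nat.totient_even hn3
    have hpos := Nat.totient_pos.2 (by omega : 0 < n)
    exact Nat.pow_le_pow_right hQ (by grind)
  calc ∑ n ∈ Finset.Icc 1 m, Q ^ (d - n.totient)
      ≤ ∑ n ∈ {1, 2} ∪ Finset.Icc 3 m, Q ^ (d - n.totient) := Finset.sum_le_sum_of_subset hsplit
    _ = 2 * Q ^ (d - 1) + ∑ n ∈ Finset.Icc 3 m, Q ^ (d - n.totient) := by
      rw [Finset.sum_union hdisj]
      simp [two_mul]
    _ ≤ 2 * Q ^ (d - 1) + (m + 1 - 3) * Q ^ (d - 2) := by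
      grw [Finset.sum_le_card_nsmul _ _ _ hlarge, Nat.card_Icc, smul_eq_mul]
    _ ≤ (2 * Q + m) * Q ^ (d - 2) := by
      rw [show d - 1 = d - 2 + 1 by omega, pow_succ]
      nlinarith [Nat.mul_le_mul_right (Q ^ (d - 2)) (by omega : m + 1 - 3 ≤ m)]

lemma le_two_mul_of_totient_le_sqrt {n d : ℕ} (h : (n.totient : ℝ) ≤ √d) : n ≤ 2 * d := by
  have : n.totient ^ 2 ≤ d := by
    exact_mod_cast (Real.le_sqrt (Nat.cast_nonneg _) (Nat.cast_nonneg _)).1 h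
  exact (Nat.le_two_mul_totient_sq n).trans (by omega)

section PdK

variable {d K : ℕ} {f g : ℤ[X]}

lemma coeff_eq_of_mem_PdK (hf : f ∈ PdK d K) (hg : g ∈ PdK d K) {i : ℕ} (hi : d ≤ i) :
    f.coeff i = g.coeff i := by
  obtain ⟨hfm, hfd, -⟩ := hf
  obtain ⟨hgm, hgd, -⟩ := hg
  rcases hi.eq_or_lt with rfl | hi
  · rw [← hfd, hfm.coeff_natDegree, hfd, ← hgd, hgm.coeff_natDegree]
  · rw [coeff_eq_zero_of_natDegree_lt (hfd ▸ hi), coeff_eq_zero_of_natDegree_lt (hgd ▸ hi)]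

lemma eq_of_mem_PdK_of_dvd {p : ℤ[X]} (hf : f ∈ PdK d K) (hg : g ∈ PdK d K) (hpf : p ∣ f)
    (hpg : p ∣ g) (hcoeff : ∀ i, p.natDegree ≤ i → i < d → f.coeff i = g.coeff i) : f = g :=
  eq_of_dvd_sub_of_coeff_eq (dvd_sub hpf hpg) fun i hi =>
    (lt_or_ge i d).elim (hcoeff i hi) (coeff_eq_of_mem_PdK hf hg)

lemma ncard_PdK_dvd_le (p : ℤ[X]) :
    {f | f ∈ PdK d K ∧ p ∣ f}.ncard ≤ (2 * K + 1) ^ (d - p.natDegree) := by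
  refine ncard_le_of_injOn_coeffs (m := p.natDegree) (fun f hf i hi => hf.1.2.2.2 _ (by omega))
    fun f hf g hg hfg => eq_of_mem_PdK_of_dvd hf.1 hg.1 hf.2 hg.2 fun i hi hid => ?_
  have := congrFun hfg ⟨i - p.natDegree, by omega⟩
  simpa [Nat.add_sub_cancel' hi] using this

lemma PdK_finite : (PdK d K).Finite :=
  finite_of_injOn_coeffs (m := 0) (fun f hf i hi => by simpa using hf.2.2.2 i hi)
    fun f hf g hg hfg => eq_of_mem_PdK_of_dvd hf hg (one_dvd f) (one_dvd g) fun i _ hid => by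
      simpa using congrFun hfg ⟨i, hid⟩

lemma X_pow_add_ofFn_mem_PdK {v : Fin d → ℤ} (hd : 0 < d) (h0 : v ⟨0, hd⟩ ≠ 0)
    (hv : ∀ i, |v i| ≤ K) : X ^ d + ofFn d v ∈ PdK d K := by
  have hdeg : (ofFn d v).degree < (X ^ d : ℤ[X]).degree := by
    rw [degree_X_pow]
    exact ofFn_degree_lt v
  refine ⟨monic_X_pow_add (ofFn_degree_lt v), ?_, ?_, fun i hi => ?_⟩
  · rw [natDegree_add_eq_left_of_degree_lt hdeg, natDegree_X_pow]
  · rwa [coeff_X_pow_add_ofFn v hd]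
  · rw [coeff_X_pow_add_ofFn v hi]
    exact hv _

lemma le_ncard_PdK (hd : 0 < d) : K * (2 * K + 1) ^ (d - 1) ≤ (PdK d K).ncard := by
  let box : Finset (Fin d → ℤ) :=
    Finset.Icc (fun i => if (i : ℕ) = 0 then 1 else -(K : ℤ)) fun _ => (K : ℤ)
  have hbox : box.card = K * (2 * K + 1) ^ (d - 1) := by
    obtain ⟨e, rfl⟩ := Nat.exists_eq_add_of_lt hd
    simp only [box, Pi.card_Icc, Fin.prod_univ_succ, Fin.val_zero, Fin.val_succ, reduceIte,
      add_eq_zero, one_ne_zero, and_false, Finset.prod_const, Finset.card_univ, Fintype.card_fin,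
      Int.card_Icc]
    congr 2 <;> omega
  have hmaps : Set.MapsTo (fun v : Fin d → ℤ => X ^ d + ofFn d v) box (PdK d K) := by
    intro v hv
    simp only [box, Finset.coe_Icc, Set.mem_Icc, Pi.le_def] at hv
    refine X_pow_add_ofFn_mem_PdK hd ?_ fun i => abs_le.2 ⟨le_trans ?_ (hv.1 i), hv.2 i⟩
    · have := hv.1 ⟨0, hd⟩
      simp only [reduceIte] at this
      omega
    · split_ifs <;> omega
  have hinj : Set.InjOn (fun v : Fin d → ℤ => X ^ d + ofFn d v) box := by
    intro v _ w _ hvw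
    funext i
    simpa [coeff_X_pow_add_ofFn _ i.2] using congrArg (coeff · i) hvw
  rw [← hbox, ← Set.ncard_coe_finset]
  exact Set.ncard_le_ncard_of_injOn _ hmaps hinj PdK_finite

lemma ncard_PdK_cyclotomic_dvd_le (hd : 2 ≤ d) {B : ℝ} (hB : B ≤ √d) :
    {f | f ∈ PdK d K ∧ ∃ n : ℕ, 1 ≤ n ∧ ((cyclotomic n ℤ).natDegree : ℝ) ≤ B ∧
        cyclotomic n ℤ ∣ f}.ncard ≤ (2 * (2 * K + 1) + 2 * d) * (2 * K + 1) ^ (d - 2) := by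
  let A : ℕ → Set ℤ[X] := fun n => {f | f ∈ PdK d K ∧ cyclotomic n ℤ ∣ f}
  have hcover : {f | f ∈ PdK d K ∧ ∃ n : ℕ, 1 ≤ n ∧ ((cyclotomic n ℤ).natDegree : ℝ) ≤ B ∧
      cyclotomic n ℤ ∣ f} ⊆ ⋃ n ∈ Finset.Icc 1 (2 * d), A n := by
    rintro f ⟨hf, n, hn, hdeg, hdvd⟩
    rw [natDegree_cyclotomic] at hdeg
    exact Set.mem_biUnion (Finset.mem_Icc.2 ⟨hn, le_two_mul_of_totient_le_sqrt (hdeg.trans hB)⟩)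
      ⟨hf, hdvd⟩
  have hfinite : (⋃ n ∈ Finset.Icc 1 (2 * d), A n).Finite :=
    PdK_finite.subset (Set.iUnion₂_subset fun n _ f hf => hf.1)
  calc _ ≤ (⋃ n ∈ Finset.Icc 1 (2 * d), A n).ncard := Set.ncard_le_ncard hcover hfinite
    _ ≤ ∑ n ∈ Finset.Icc 1 (2 * d), (A n).ncard := Set.ncard_biUnion_le _ _
    _ ≤ ∑ n ∈ Finset.Icc 1 (2 * d), (2 * K + 1) ^ (d - n.totient) := Finset.sum_le_sum fun n _ => by
      simpa [natDegree_cyclotomic] using ncard_PdK_dvd_le (d := d) (K := K) (cyclotomic n ℤ)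
    _ ≤ _ := sum_Icc_pow_sub_totient_le (by omega) hd _

end PdK

theorem stmt_12_general (a : ℕ) (c : ℝ) (hc : 0 < c) :
    ∃ C : ℝ, 0 < C ∧ ∃ d₀ : ℕ, ∀ d : ℕ, d₀ ≤ d → ∀ K : ℕ,
      c * (d : ℝ) < (K : ℝ) → (K : ℝ) ≤ (d : ℝ) ^ (a - 1) →
      (Nat.card {f : Polynomial ℤ | f ∈ PdK d K ∧ ∃ n : ℕ, 1 ≤ n ∧
            ((Polynomial.cyclotomic n ℤ).natDegree : ℝ) ≤ Real.sqrt d / (Real.log d) ^ 2 ∧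
            Polynomial.cyclotomic n ℤ ∣ f} : ℝ) /
          (Nat.card ↥(PdK d K) : ℝ)
        ≤ C / (K : ℝ) := by
  refine ⟨2 + 1 / c, by positivity, 3, fun d hd K hcK _ => ?_⟩
  have hdR : (3 : ℝ) ≤ d := by exact_mod_cast hd
  have hK : (0 : ℝ) < K := (by positivity : (0 : ℝ) < c * d).trans hcK
  have hlog : 1 ≤ Real.log d := by
    rw [Real.le_log_iff_exp_le (by linarith)]
    linarith [Real.exp_one_lt_d9]
  have hnum := ncard_PdK_cyclotomic_dvd_le (K := K) (B := √d / Real.log d ^ 2) (by omega)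
    (div_le_self (Real.sqrt_nonneg d) (one_le_pow₀ hlog))
  have hden := le_ncard_PdK (d := d) (K := K) (by omega)
  rw [show d - 1 = d - 2 + 1 by omega, pow_succ] at hden
  rw [Nat.card_coe_set_eq, Nat.card_coe_set_eq]
  have hnumR := (Nat.cast_le (α := ℝ)).2 hnum
  have hdenR := (Nat.cast_le (α := ℝ)).2 hden
  push_cast at hnumR hdenR
  set Q : ℝ := 2 * K + 1
  have hQc : 2 * d ≤ Q / c := by rw [le_div_iff₀ hc]; linarith
  rw [div_le_div_iff₀ ((by positivity : (0 : ℝ) < K * (Q ^ (d - 2) * Q)).trans_le hdenR) hK]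
  calc _ ≤ (2 * Q + 2 * d) * Q ^ (d - 2) * K := by gcongr
    _ ≤ (2 * Q + Q / c) * Q ^ (d - 2) * K := by gcongr
    _ = (2 + 1 / c) * (K * (Q ^ (d - 2) * Q)) := by ring
    _ ≤ _ := by gcongr

theorem stmt_12 (a : ℕ) (ha : 1 < a) (c : ℝ) (hc : 0 < c) :
    ∃ C : ℝ, 0 < C ∧ ∃ d₀ : ℕ, ∀ d : ℕ, d₀ ≤ d → ∀ K : ℕ,
      c * (d : ℝ) < (K : ℝ) → (K : ℝ) ≤ (d : ℝ) ^ (a - 1) →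
      (Nat.card {f : Polynomial ℤ | f ∈ PdK d K ∧ ∃ n : ℕ, 1 ≤ n ∧
            ((Polynomial.cyclotomic n ℤ).natDegree : ℝ) ≤ Real.sqrt d / (Real.log d) ^ 2 ∧
            Polynomial.cyclotomic n ℤ ∣ f} : ℝ) /
          (Nat.card ↥(PdK d K) : ℝ)
        ≤ C / (K : ℝ) :=
  stmt_12_general a c hc
end

section
/- There exists a universal constant C > 0 such that for all integers K ≥ 1 and d ≥ 1, if a_0, a_1, …, a_d are i.i.d. random variables each uniformly distributed on the integers {-K, …, K}, then for every integer x, P(a_0 + a_1 + ⋯ + a_d = x) ≤ C·√(K/d). -/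
open MeasureTheory ProbabilityTheory Finset


lemma cb_sq (k : ℕ) : Nat.centralBinom k ^ 2 * (k + 1) ≤ 4 * 16 ^ k := by
  induction k with
  | zero => simp [Nat.centralBinom]
  | succ k ih =>
    have h1 := Nat.succ_mul_centralBinom_succ k
    have h1' : ((k : ℤ) + 1) * (Nat.centralBinom (k + 1) : ℤ)
        = 2 * (2 * (k : ℤ) + 1) * (Nat.centralBinom k : ℤ) := by exact_mod_cast h1
    have ih' : (Nat.centralBinom k : ℤ) ^ 2 * ((k : ℤ) + 1) ≤ 4 * 16 ^ k := by exact_mod_cast ih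
    have goal : (Nat.centralBinom (k + 1) : ℤ) ^ 2 * ((k : ℤ) + 1 + 1) ≤ 4 * 16 ^ (k + 1) := by
      set c : ℤ := (Nat.centralBinom k : ℤ)
      set c' : ℤ := (Nat.centralBinom (k + 1) : ℤ)
      have hkey : (2 * (k : ℤ) + 1) ^ 2 * (k + 2) ≤ 4 * (k + 1) ^ 3 := by nlinarith [sq_nonneg ((k:ℤ))]
      have hsq : (((k : ℤ) + 1) * c') ^ 2 = (2 * (2 * k + 1) * c) ^ 2 := by rw [h1']
      have e1 : ((k : ℤ) + 1) ^ 3 * (c' ^ 2 * (k + 1 + 1)) =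
          (4 * (2 * k + 1) ^ 2 * (k + 2)) * (c ^ 2 * (k + 1)) := by
        have h : ((k : ℤ) + 1) ^ 2 * c' ^ 2 = 4 * (2 * k + 1) ^ 2 * c ^ 2 := by
          nlinarith [hsq]
        nlinarith [h]
      have e2 : (4 * (2 * (k : ℤ) + 1) ^ 2 * (k + 2)) * (c ^ 2 * (k + 1)) ≤
          (4 * (2 * (k : ℤ) + 1) ^ 2 * (k + 2)) * (4 * 16 ^ k) :=
        mul_le_mul_of_nonneg_left ih' (by positivity)
      have e3 : (4 * (2 * (k : ℤ) + 1) ^ 2 * (k + 2)) * (4 * 16 ^ k) ≤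
          (4 * (4 * ((k : ℤ) + 1) ^ 3)) * (4 * 16 ^ k) := by
        have h := mul_le_mul_of_nonneg_right hkey (by positivity : (0:ℤ) ≤ 4 * 16 ^ k)
        nlinarith [h]
      have e4 : ((k : ℤ) + 1) ^ 3 * (c' ^ 2 * (k + 1 + 1)) ≤
          ((k : ℤ) + 1) ^ 3 * (4 * 16 ^ (k + 1)) := by
        calc ((k : ℤ) + 1) ^ 3 * (c' ^ 2 * (k + 1 + 1)) ≤
            (4 * (4 * ((k : ℤ) + 1) ^ 3)) * (4 * 16 ^ k) := by
              rw [e1]; exact e2.trans e3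
          _ = ((k : ℤ) + 1) ^ 3 * (4 * 16 ^ (k + 1)) := by ring
      exact le_of_mul_le_mul_left e4 (by positivity)
    exact_mod_cast goal



lemma choose_sq (m k : ℕ) : (m.choose k) ^ 2 * (m + 1) ≤ 9 * 4 ^ m := by
  rcases Nat.even_or_odd m with ⟨j, hj⟩ | ⟨j, hj⟩
  · subst hj
    have h1 : (j + j).choose k ≤ Nat.centralBinom j := by
      have := Nat.choose_le_centralBinom k j
      simpa [two_mul] using this
    have h2 : Nat.centralBinom j ^ 2 * (j + j + 1) ≤ 2 * (Nat.centralBinom j ^ 2 * (j + 1)) := by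
      nlinarith [Nat.zero_le (Nat.centralBinom j ^ 2)]
    have h16 : (16 : ℕ) ^ j = 4 ^ (j + j) := by
      rw [pow_add, ← mul_pow]; norm_num
    calc (j + j).choose k ^ 2 * (j + j + 1) ≤ Nat.centralBinom j ^ 2 * (j + j + 1) := by
          exact Nat.mul_le_mul_right _ (Nat.pow_le_pow_left h1 2)
      _ ≤ 2 * (Nat.centralBinom j ^ 2 * (j + 1)) := h2
      _ ≤ 2 * (4 * 16 ^ j) := Nat.mul_le_mul_left _ (cb_sq j)
      _ ≤ 9 * 4 ^ (j + j) := by omega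
  · subst hj
    have hmid : (2 * j + 1).choose k ≤ (2 * j + 1).choose j := by
      have h := Nat.choose_le_middle k (2 * j + 1)
      have hdiv : (2 * j + 1) / 2 = j := by omega
      rwa [hdiv] at h
    have hsym : (2 * j + 1).choose (j + 1) = (2 * j + 1).choose j := by
      have h := Nat.choose_symm (by omega : j + 1 ≤ 2 * j + 1)
      have h2 : 2 * j + 1 - (j + 1) = j := by omega
      rw [h2] at h
      exact h.symm
    have hdb : 2 * (2 * j + 1).choose j = Nat.centralBinom (j + 1) := by
      have h3 : Nat.centralBinom (j + 1) = (2 * j + 1).choose j + (2 * j + 1).choose (j + 1) := by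
        rw [Nat.centralBinom]
        have h4 : 2 * (j + 1) = (2 * j + 1) + 1 := by ring
        rw [h4, Nat.choose_succ_succ']
      omega
    set c := (2 * j + 1).choose j with hc
    have hA : (2 * j + 1).choose k ^ 2 * (2 * j + 1 + 1) ≤ c ^ 2 * (2 * j + 2) :=
      Nat.mul_le_mul (Nat.pow_le_pow_left hmid 2) (by omega)
    have hB : 4 * (c ^ 2 * (2 * j + 2)) = Nat.centralBinom (j + 1) ^ 2 * (2 * j + 2) := by
      rw [← hdb]; ring
    have hC : Nat.centralBinom (j + 1) ^ 2 * (2 * j + 2) ≤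
        2 * (Nat.centralBinom (j + 1) ^ 2 * (j + 2)) := by
      nlinarith [Nat.zero_le (Nat.centralBinom (j + 1) ^ 2)]
    have hD := cb_sq (j + 1)
    have h16 : (16 : ℕ) ^ (j + 1) = 16 * 16 ^ j := by rw [pow_succ]; ring
    have h4p : (4 : ℕ) ^ (2 * j + 1) = 4 * 16 ^ j := by
      rw [pow_succ, two_mul, pow_add, ← mul_pow]; ring_nf
    have hE : 4 * (c ^ 2 * (2 * j + 2)) ≤ 4 * (32 * 16 ^ j) := by
      rw [hB]
      calc Nat.centralBinom (j + 1) ^ 2 * (2 * j + 2)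
          ≤ 2 * (Nat.centralBinom (j + 1) ^ 2 * (j + 2)) := hC
        _ ≤ 2 * (4 * 16 ^ (j + 1)) := Nat.mul_le_mul_left _ hD
        _ = 4 * (32 * 16 ^ j) := by rw [h16]; ring
    have hF : c ^ 2 * (2 * j + 2) ≤ 32 * 16 ^ j :=
      Nat.le_of_mul_le_mul_left hE (by norm_num)
    calc (2 * j + 1).choose k ^ 2 * (2 * j + 1 + 1) ≤ c ^ 2 * (2 * j + 2) := hA
      _ ≤ 32 * 16 ^ j := hF
      _ ≤ 36 * 16 ^ j := Nat.mul_le_mul_right _ (by norm_num)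
      _ = 9 * 4 ^ (2 * j + 1) := by rw [h4p]; ring



lemma choose_sqrt (m k : ℕ) : (m.choose k : ℝ) * Real.sqrt (m + 1) ≤ 3 * 2 ^ m := by
  have h : ((m.choose k : ℝ) * Real.sqrt (m + 1)) ^ 2 ≤ (3 * 2 ^ m) ^ 2 := by
    rw [mul_pow, Real.sq_sqrt (by positivity : (0:ℝ) ≤ (m : ℝ) + 1)]
    have hq : ((m.choose k : ℝ)) ^ 2 * ((m : ℝ) + 1) ≤ 9 * 4 ^ m := by
      exact_mod_cast choose_sq m k
    calc ((m.choose k : ℝ)) ^ 2 * ((m : ℝ) + 1) ≤ 9 * 4 ^ m := hq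
      _ = (3 * 2 ^ m) ^ 2 := by rw [mul_pow, ← pow_mul, mul_comm m 2, two_mul, pow_add, ← mul_pow]; norm_num
  have hnn : (0:ℝ) ≤ (m.choose k : ℝ) * Real.sqrt (m + 1) := by positivity
  calc (m.choose k : ℝ) * Real.sqrt (m + 1)
      = Real.sqrt (((m.choose k : ℝ) * Real.sqrt (m + 1)) ^ 2) := (Real.sqrt_sq hnn).symm
    _ ≤ Real.sqrt ((3 * 2 ^ m) ^ 2) := Real.sqrt_le_sqrt h
    _ = 3 * 2 ^ m := Real.sqrt_sq (by positivity)



open Finset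

lemma fiber_card_le (n K : ℕ) (x : ℤ) (g : Fin n → ℕ) :
    ((((Fintype.piFinset fun _ : Fin n => Finset.Icc (-(K:ℤ)) (K:ℤ)).filter
        (fun t => ∑ i, t i = x)).filter
      (fun t => (fun i => (t i + (K:ℤ)).toNat / 2) = g)).card : ℕ)
    ≤ ((Finset.univ.filter fun i : Fin n => g i < K).card).choose
        ((x + n * K - 2 * ∑ i, (g i : ℤ)).toNat) := by
  classical
  set c := (x + (n:ℤ) * K - 2 * ∑ i, (g i : ℤ)).toNat with hc
  rw [← Finset.card_powersetCard c (Finset.univ.filter fun i : Fin n => g i < K)]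
  have hfact : ∀ t, t ∈ ((Fintype.piFinset fun _ : Fin n => Finset.Icc (-(K:ℤ)) (K:ℤ)).filter
        (fun t => ∑ i, t i = x)).filter
      (fun t => (fun i => (t i + (K:ℤ)).toNat / 2) = g) →
      (∀ i, ((t i + (K:ℤ)).toNat : ℤ) = t i + K ∧ (t i + (K:ℤ)).toNat ≤ 2*K ∧
        (t i + (K:ℤ)).toNat / 2 = g i) ∧ ∑ i, t i = x := by
    intro t ht
    rw [Finset.mem_filter, Finset.mem_filter] at ht
    obtain ⟨⟨hpi, hsum⟩, hg⟩ := ht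
    refine ⟨fun i => ?_, hsum⟩
    have hti := Fintype.mem_piFinset.mp hpi i
    rw [Finset.mem_Icc] at hti
    have h1 : (0:ℤ) ≤ t i + K := by omega
    have h2 : ((t i + (K:ℤ)).toNat : ℤ) = t i + K := Int.toNat_of_nonneg h1
    have h3 : (t i + (K:ℤ)).toNat ≤ 2*K := by omega
    exact ⟨h2, h3, congrFun hg i⟩
  refine Finset.card_le_card_of_injOn
    (fun t => Finset.univ.filter fun i => (t i + (K:ℤ)).toNat % 2 = 1) ?_ ?_
  · intro t ht
    obtain ⟨hi, hsum⟩ := hfact t ht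
    rw [Finset.mem_coe, Finset.mem_powersetCard]
    constructor
    · intro i hiA
      rw [Finset.mem_filter] at hiA ⊢
      obtain ⟨h2, h3, h4⟩ := hi i
      refine ⟨Finset.mem_univ _, ?_⟩
      omega
    · have hS2 : ∀ i, (((t i + (K:ℤ)).toNat % 2 : ℕ) : ℤ) = t i + K - 2 * g i := by
        intro i
        obtain ⟨h2, h3, h4⟩ := hi i
        omega
      have hsum2 : ∑ i, (((t i + (K:ℤ)).toNat % 2 : ℕ) : ℤ)
          = x + n * K - 2 * ∑ i, (g i : ℤ) := by
        rw [Finset.sum_congr rfl fun i _ => hS2 i]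
        rw [Finset.sum_sub_distrib, Finset.sum_add_distrib, hsum, Finset.sum_const,
          Finset.card_univ, Fintype.card_fin, ← Finset.mul_sum]
        push_cast
        ring
      have hite : ∀ i : Fin n, (((t i + (K:ℤ)).toNat % 2 : ℕ) : ℤ)
          = if (t i + (K:ℤ)).toNat % 2 = 1 then 1 else 0 := by
        intro i
        rcases Nat.mod_two_eq_zero_or_one ((t i + (K:ℤ)).toNat) with h | h <;> simp [h]
      have hcardA : ((Finset.univ.filter fun i => (t i + (K:ℤ)).toNat % 2 = 1).card : ℤ)
          = ∑ i, (((t i + (K:ℤ)).toNat % 2 : ℕ) : ℤ) := by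
        rw [Finset.card_filter]
        push_cast
        exact Finset.sum_congr rfl fun i _ => (hite i).symm
      show (Finset.univ.filter fun i => (t i + (K:ℤ)).toNat % 2 = 1).card = c
      omega
  · intro t1 ht1 t2 ht2 hA
    replace hA : Finset.univ.filter (fun i => (t1 i + (K:ℤ)).toNat % 2 = 1)
        = Finset.univ.filter (fun i => (t2 i + (K:ℤ)).toNat % 2 = 1) := hA
    obtain ⟨hi1, _⟩ := hfact t1 (Finset.mem_coe.mp ht1)
    obtain ⟨hi2, _⟩ := hfact t2 (Finset.mem_coe.mp ht2)
    funext i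
    obtain ⟨a2, a3, a4⟩ := hi1 i
    obtain ⟨b2, b3, b4⟩ := hi2 i
    have hmem : ((t1 i + (K:ℤ)).toNat % 2 = 1) ↔ ((t2 i + (K:ℤ)).toNat % 2 = 1) := by
      constructor <;> intro h
      · have hm : i ∈ Finset.univ.filter fun j => (t1 j + (K:ℤ)).toNat % 2 = 1 :=
          Finset.mem_filter.mpr ⟨Finset.mem_univ _, h⟩
        rw [hA] at hm
        exact (Finset.mem_filter.mp hm).2
      · have hm : i ∈ Finset.univ.filter fun j => (t2 j + (K:ℤ)).toNat % 2 = 1 :=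
          Finset.mem_filter.mpr ⟨Finset.mem_univ _, h⟩
        rw [← hA] at hm
        exact (Finset.mem_filter.mp hm).2
    omega



open Finset

lemma count_g (n K : ℕ) (hK : 1 ≤ K) (S : Finset (Fin n)) :
    (((Fintype.piFinset fun _ : Fin n => Finset.range (K+1)).filter
      (fun g => Finset.univ.filter (fun i => g i < K) = S)).card : ℕ) = K ^ S.card := by
  classical
  have hset : ((Fintype.piFinset fun _ : Fin n => Finset.range (K+1)).filter
      (fun g => Finset.univ.filter (fun i => g i < K) = S))
      = Fintype.piFinset (fun i => if i ∈ S then Finset.range K else {K}) := by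
    ext g
    rw [Finset.mem_filter, Fintype.mem_piFinset, Fintype.mem_piFinset, Finset.ext_iff]
    simp only [Finset.mem_range, Finset.mem_filter, Finset.mem_univ, true_and]
    constructor
    · rintro ⟨h1, h2⟩ i
      by_cases hi : i ∈ S
      · simp only [hi, if_true, Finset.mem_range]
        exact (h2 i).mpr hi
      · simp only [hi, if_false, Finset.mem_singleton]
        have := h1 i
        have h4 : ¬ (g i < K) := fun hlt => hi ((h2 i).mp hlt)
        omega
    · intro h
      constructor
      · intro i
        have := h i
        by_cases hi : i ∈ S <;> simp only [hi, if_true, if_false, Finset.mem_range,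
          Finset.mem_singleton] at this <;> omega
      · intro i
        have := h i
        by_cases hi : i ∈ S
        · simp only [hi, if_true, Finset.mem_range] at this
          exact ⟨fun _ => hi, fun _ => this⟩
        · simp only [hi, if_false, Finset.mem_singleton] at this
          exact ⟨fun hlt => absurd hlt (by omega), fun hmem => absurd hmem hi⟩
  rw [hset, Fintype.card_piFinset]
  calc ∏ i, (if i ∈ S then Finset.range K else ({K} : Finset ℕ)).card
      = ∏ i, (if i ∈ S then K else 1) := by
        refine Finset.prod_congr rfl fun i _ => ?_
        by_cases hi : i ∈ S <;> simp [hi]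
    _ = K ^ S.card := by
        rw [Finset.prod_ite_mem, Finset.univ_inter, Finset.prod_const]



open Finset

lemma analytic (n K : ℕ) (hK : 1 ≤ K) :
    ∑ j ∈ Finset.range (n+1), ((n.choose j : ℝ) * (2*(K:ℝ))^j / Real.sqrt ((j:ℝ)+1))
      ≤ (2*(K:ℝ)+1)^n * Real.sqrt ((2*(K:ℝ)+1) / (((n:ℝ)+1) * (2*(K:ℝ)))) := by
  have hKpos : (0:ℝ) < 2*(K:ℝ) := by
    have : (1:ℝ) ≤ (K:ℝ) := by exact_mod_cast hK
    linarith
  set w : ℕ → ℝ := fun j => (n.choose j : ℝ) * (2*(K:ℝ))^j with hw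
  have hwnn : ∀ j, 0 ≤ w j := fun j => by positivity
  have hT1 : ∑ j ∈ Finset.range (n+1), w j = (2*(K:ℝ)+1)^n := by
    rw [add_pow (2*(K:ℝ)) 1 n]
    refine Finset.sum_congr rfl fun j _ => ?_
    rw [hw]; ring
  have hT2 : ∑ j ∈ Finset.range (n+1), w j / ((j:ℝ)+1)
      ≤ (2*(K:ℝ)+1)^(n+1) / (((n:ℝ)+1) * (2*(K:ℝ))) := by
    have hterm : ∀ j ∈ Finset.range (n+1), w j / ((j:ℝ)+1)
        = (((n+1).choose (j+1) : ℝ) * (2*(K:ℝ))^(j+1)) / (((n:ℝ)+1) * (2*(K:ℝ))) := by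
      intro j _
      have hch := Nat.add_one_mul_choose_eq n j
      have hch' : ((n:ℝ)+1) * (n.choose j : ℝ) = ((n+1).choose (j+1) : ℝ) * ((j:ℝ)+1) := by
        exact_mod_cast hch
      rw [hw]
      field_simp
      rw [pow_succ]
      linear_combination ((2*(K:ℝ))^j * (2*(K:ℝ))) * hch'
    rw [Finset.sum_congr rfl hterm, ← Finset.sum_div]
    have hsum : ∑ j ∈ Finset.range (n+1), (((n+1).choose (j+1) : ℝ) * (2*(K:ℝ))^(j+1))
        ≤ (2*(K:ℝ)+1)^(n+1) := by
      have hexp : (2*(K:ℝ)+1)^(n+1)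
          = ∑ j ∈ Finset.range (n+2), ((n+1).choose j : ℝ) * (2*(K:ℝ))^j := by
        rw [add_pow (2*(K:ℝ)) 1 (n+1)]
        exact Finset.sum_congr rfl fun j _ => by ring
      rw [hexp, Finset.sum_range_succ' (fun j => ((n+1).choose j : ℝ) * (2*(K:ℝ))^j) (n+1)]
      simp only [Nat.choose_zero_right, pow_zero, Nat.cast_one]
      nlinarith []
    exact div_le_div_of_nonneg_right hsum (by positivity) |>.trans (le_refl _)
  -- Cauchy–Schwarz
  set S := ∑ j ∈ Finset.range (n+1), w j / Real.sqrt ((j:ℝ)+1) with hS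
  have hSnn : 0 ≤ S := Finset.sum_nonneg fun j _ => by positivity
  have hCS : S^2 ≤ (∑ j ∈ Finset.range (n+1), w j)
      * (∑ j ∈ Finset.range (n+1), w j / ((j:ℝ)+1)) := by
    have h := Finset.sum_mul_sq_le_sq_mul_sq (Finset.range (n+1))
      (fun j => Real.sqrt (w j)) (fun j => Real.sqrt (w j) / Real.sqrt ((j:ℝ)+1))
    have e1 : ∀ j ∈ Finset.range (n+1),
        Real.sqrt (w j) * (Real.sqrt (w j) / Real.sqrt ((j:ℝ)+1)) = w j / Real.sqrt ((j:ℝ)+1) := by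
      intro j _
      rw [mul_div_assoc']
      rw [Real.mul_self_sqrt (hwnn j)]
    have e2 : ∀ j ∈ Finset.range (n+1), Real.sqrt (w j) ^ 2 = w j :=
      fun j _ => Real.sq_sqrt (hwnn j)
    have e3 : ∀ j ∈ Finset.range (n+1),
        (Real.sqrt (w j) / Real.sqrt ((j:ℝ)+1)) ^ 2 = w j / ((j:ℝ)+1) := by
      intro j _
      rw [div_pow, Real.sq_sqrt (hwnn j), Real.sq_sqrt (by positivity : (0:ℝ) ≤ (j:ℝ)+1)]
    rw [Finset.sum_congr rfl e1, Finset.sum_congr rfl e2, Finset.sum_congr rfl e3] at h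
    exact h
  rw [hT1] at hCS
  have hCS2 : S^2 ≤ (2*(K:ℝ)+1)^n * ((2*(K:ℝ)+1)^(n+1) / (((n:ℝ)+1) * (2*(K:ℝ)))) :=
    hCS.trans (mul_le_mul_of_nonneg_left hT2 (by positivity))
  have hEq : (2*(K:ℝ)+1)^n * ((2*(K:ℝ)+1)^(n+1) / (((n:ℝ)+1) * (2*(K:ℝ))))
      = ((2*(K:ℝ)+1)^n)^2 * ((2*(K:ℝ)+1) / (((n:ℝ)+1) * (2*(K:ℝ)))) := by
    rw [pow_succ]
    field_simp
  calc S = Real.sqrt (S^2) := (Real.sqrt_sq hSnn).symm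
    _ ≤ Real.sqrt (((2*(K:ℝ)+1)^n)^2 * ((2*(K:ℝ)+1) / (((n:ℝ)+1) * (2*(K:ℝ))))) := by
        refine Real.sqrt_le_sqrt ?_
        rw [← hEq]
        exact hCS2
    _ = (2*(K:ℝ)+1)^n * Real.sqrt ((2*(K:ℝ)+1) / (((n:ℝ)+1) * (2*(K:ℝ)))) := by
        rw [Real.sqrt_mul (sq_nonneg _), Real.sqrt_sq (by positivity)]



open Finset

lemma main_count (n K : ℕ) (hK : 1 ≤ K) (x : ℤ) :
    (((Fintype.piFinset fun _ : Fin n => Finset.Icc (-(K:ℤ)) (K:ℤ)).filter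
        (fun t => ∑ i, t i = x)).card : ℝ)
      ≤ 3 * (2*(K:ℝ)+1)^n * Real.sqrt ((2*(K:ℝ)+1) / (((n:ℝ)+1) * (2*(K:ℝ)))) := by
  classical
  set F := ((Fintype.piFinset fun _ : Fin n => Finset.Icc (-(K:ℤ)) (K:ℤ)).filter
        (fun t => ∑ i, t i = x)) with hF
  set H := (Fintype.piFinset fun _ : Fin n => Finset.range (K+1)) with hH
  set φ : ℕ → ℝ := fun m => 3 * 2 ^ m / Real.sqrt ((m:ℝ) + 1) with hφ
  have hφnn : ∀ m, 0 ≤ φ m := fun m => by positivity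
  -- step 1
  have hmaps : ∀ t ∈ F, (fun i => (t i + (K:ℤ)).toNat / 2) ∈ H := by
    intro t ht
    rw [hF, Finset.mem_filter] at ht
    rw [hH, Fintype.mem_piFinset]
    intro i
    have hti := Fintype.mem_piFinset.mp ht.1 i
    rw [Finset.mem_Icc] at hti
    rw [Finset.mem_range]
    omega
  have hcard1 : F.card
      = ∑ g ∈ H, (F.filter fun t => (fun i => (t i + (K:ℤ)).toNat / 2) = g).card :=
    Finset.card_eq_sum_card_fiberwise hmaps
  -- step 2
  have hfib : ∀ g : Fin n → ℕ,
      ((F.filter fun t => (fun i => (t i + (K:ℤ)).toNat / 2) = g).card : ℝ)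
        ≤ φ ((Finset.univ.filter fun i : Fin n => g i < K).card) := by
    intro g
    set m := (Finset.univ.filter fun i : Fin n => g i < K).card with hm
    set c := (x + n * K - 2 * ∑ i, (g i : ℤ)).toNat with hcdef
    have h1 : ((F.filter fun t => (fun i => (t i + (K:ℤ)).toNat / 2) = g).card : ℝ)
        ≤ (m.choose c : ℝ) := Nat.cast_le.mpr (fiber_card_le n K x g)
    refine h1.trans ?_
    have h2 := choose_sqrt m c
    have hpos : (0:ℝ) < Real.sqrt ((m:ℝ) + 1) := Real.sqrt_pos.mpr (by positivity)
    rw [hφ, le_div_iff₀ hpos]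
    exact h2
  have hstep2 : (F.card : ℝ)
      ≤ ∑ g ∈ H, φ ((Finset.univ.filter fun i : Fin n => g i < K).card) := by
    rw [hcard1]
    push_cast
    exact Finset.sum_le_sum fun g _ => hfib g
  -- step 3: regroup by S
  have hregroup : ∑ g ∈ H, φ ((Finset.univ.filter fun i : Fin n => g i < K).card)
      = ∑ S ∈ (Finset.univ : Finset (Fin n)).powerset,
          ((K:ℝ) ^ S.card * φ (S.card)) := by
    rw [← Finset.sum_fiberwise_of_maps_to
      (fun g (_ : g ∈ H) => Finset.mem_powerset.mpr (Finset.subset_univ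
        (Finset.univ.filter fun i => g i < K)))
      (fun g => φ ((Finset.univ.filter fun i : Fin n => g i < K).card))]
    refine Finset.sum_congr rfl fun S _ => ?_
    have hconst : ∀ g ∈ H.filter (fun g => Finset.univ.filter (fun i => g i < K) = S),
        φ ((Finset.univ.filter fun i : Fin n => g i < K).card) = φ S.card := by
      intro g hg
      rw [Finset.mem_filter] at hg
      rw [hg.2]
    rw [Finset.sum_congr rfl hconst, Finset.sum_const, count_g n K hK S, nsmul_eq_mul]
    push_cast
    ring
  -- step 4: sum over sizes
  have hsizes : ∑ S ∈ (Finset.univ : Finset (Fin n)).powerset, ((K:ℝ) ^ S.card * φ (S.card))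
      = ∑ j ∈ Finset.range (n+1), (n.choose j) • ((K:ℝ) ^ j * φ j) := by
    have h := Finset.sum_powerset_apply_card (fun j => (K:ℝ) ^ j * φ j)
      (x := (Finset.univ : Finset (Fin n)))
    rw [Finset.card_univ, Fintype.card_fin] at h
    exact h
  have hfinal : ∑ j ∈ Finset.range (n+1), (n.choose j) • ((K:ℝ) ^ j * φ j)
      = 3 * ∑ j ∈ Finset.range (n+1), ((n.choose j : ℝ) * (2*(K:ℝ))^j / Real.sqrt ((j:ℝ)+1)) := by
    rw [Finset.mul_sum]
    refine Finset.sum_congr rfl fun j _ => ?_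
    rw [nsmul_eq_mul, hφ, mul_pow]
    ring
  calc (F.card : ℝ) ≤ ∑ g ∈ H, φ ((Finset.univ.filter fun i : Fin n => g i < K).card) := hstep2
    _ = ∑ j ∈ Finset.range (n+1), (n.choose j) • ((K:ℝ) ^ j * φ j) := by rw [hregroup, hsizes]
    _ = 3 * ∑ j ∈ Finset.range (n+1),
        ((n.choose j : ℝ) * (2*(K:ℝ))^j / Real.sqrt ((j:ℝ)+1)) := hfinal
    _ ≤ 3 * ((2*(K:ℝ)+1)^n * Real.sqrt ((2*(K:ℝ)+1) / (((n:ℝ)+1) * (2*(K:ℝ))))) :=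
        mul_le_mul_of_nonneg_left (analytic n K hK) (by norm_num)
    _ = 3 * (2*(K:ℝ)+1)^n * Real.sqrt ((2*(K:ℝ)+1) / (((n:ℝ)+1) * (2*(K:ℝ)))) := by ring



open MeasureTheory ProbabilityTheory

theorem stmt_16 :
    ∃ C : ℝ, 0 < C ∧
      ∀ (K d : ℕ), 1 ≤ K → 1 ≤ d →
      ∀ {Ω : Type} [MeasurableSpace Ω] (μ : Measure Ω) [IsProbabilityMeasure μ]
        (a : Fin (d + 1) → Ω → ℤ),
        (∀ i, Measurable (a i)) →
        -- `a 0, …, a d` are independent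
        iIndepFun a μ →
        -- each uniformly distributed on `{-K, …, K}`
        (∀ i, ∀ x : ℤ, (μ {ω | a i ω = x}).toReal =
          if |x| ≤ (K : ℤ) then 1 / (2 * (K : ℝ) + 1) else 0) →
        ∀ x : ℤ,
          (μ {ω | (∑ i, a i ω) = x}).toReal ≤ C * Real.sqrt ((K : ℝ) / (d : ℝ)) := by
  refine ⟨5, by norm_num, ?_⟩
  intro K d hK hd Ω _ μ _ a ha hind hunif x
  classical
  set B : Finset ℤ := Finset.Icc (-(K:ℤ)) (K:ℤ) with hB
  set F : Finset (Fin (d+1) → ℤ) :=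
    (Fintype.piFinset fun _ : Fin (d+1) => B).filter (fun t => ∑ i, t i = x) with hF
  set E : (Fin (d+1) → ℤ) → Set Ω := fun t => ⋂ i, {ω | a i ω = t i} with hE
  -- bad events are null
  have h2 : ∀ i, μ {ω | ¬ |a i ω| ≤ (K:ℤ)} = 0 := by
    intro i
    have hsub : {ω | ¬ |a i ω| ≤ (K:ℤ)} ⊆ ⋃ y ∈ {y : ℤ | ¬ |y| ≤ (K:ℤ)}, {ω | a i ω = y} :=
      fun ω h => Set.mem_biUnion h rfl
    refine measure_mono_null hsub ?_
    rw [measure_biUnion_null_iff (Set.to_countable _)]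
    intro y hy
    have h0 := hunif i y
    rw [if_neg hy] at h0
    have hfin : μ {ω | a i ω = y} ≠ ⊤ := measure_ne_top μ _
    rcases (ENNReal.toReal_eq_zero_iff _).mp h0 with h | h
    · exact h
    · exact absurd h hfin
  -- inclusion
  have h1 : {ω | (∑ i, a i ω) = x} ⊆ (⋃ t ∈ F, E t) ∪ ⋃ i, {ω | ¬ |a i ω| ≤ (K:ℤ)} := by
    intro ω hω
    by_cases hgood : ∀ i, |a i ω| ≤ (K:ℤ)
    · left
      refine Set.mem_biUnion (show (fun i => a i ω) ∈ F from ?_) ?_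
      · rw [hF, Finset.mem_filter]
        refine ⟨Fintype.mem_piFinset.mpr fun i => ?_, hω⟩
        rw [hB, Finset.mem_Icc]
        exact abs_le.mp (hgood i)
      · exact Set.mem_iInter.mpr fun i => rfl
    · right
      push_neg at hgood
      obtain ⟨i, hi⟩ := hgood
      exact Set.mem_iUnion.mpr ⟨i, not_le.mpr hi⟩
  -- measure bound
  have h3 : μ {ω | (∑ i, a i ω) = x} ≤ ∑ t ∈ F, μ (E t) := by
    refine (measure_mono h1).trans ?_
    refine (measure_union_le _ _).trans ?_
    have hb : μ (⋃ i, {ω | ¬ |a i ω| ≤ (K:ℤ)}) = 0 := measure_iUnion_null h2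
    rw [hb, add_zero]
    exact measure_biUnion_finset_le F E
  -- each event's measure
  have h4 : ∀ t ∈ F, (μ (E t)).toReal = (1 / (2*(K:ℝ)+1))^(d+1) := by
    intro t ht
    have hmeas : μ (E t) = ∏ i, μ {ω | a i ω = t i} := by
      refine hind.meas_iInter fun i => ⟨{t i}, measurableSet_singleton _, rfl⟩
    rw [hmeas, ENNReal.toReal_prod]
    have : ∀ i, (μ {ω | a i ω = t i}).toReal = 1 / (2*(K:ℝ)+1) := by
      intro i
      have hti : |t i| ≤ (K:ℤ) := by
        rw [hF, Finset.mem_filter] at ht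
        have := Fintype.mem_piFinset.mp ht.1 i
        rw [hB, Finset.mem_Icc] at this
        exact abs_le.mpr this
      rw [hunif i (t i), if_pos hti]
    rw [Finset.prod_congr rfl (fun i _ => this i), Finset.prod_const]
    simp
  -- combine
  have h5 : (μ {ω | (∑ i, a i ω) = x}).toReal ≤ (F.card : ℝ) * (1 / (2*(K:ℝ)+1))^(d+1) := by
    have hne : (∑ t ∈ F, μ (E t)) ≠ ⊤ :=
      (ENNReal.sum_lt_top.mpr fun t _ => measure_lt_top μ _).ne
    calc (μ {ω | (∑ i, a i ω) = x}).toReal ≤ (∑ t ∈ F, μ (E t)).toReal :=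
          ENNReal.toReal_mono hne h3
      _ = ∑ t ∈ F, (μ (E t)).toReal := ENNReal.toReal_sum fun t _ => measure_ne_top μ _
      _ = ∑ t ∈ F, (1 / (2*(K:ℝ)+1))^(d+1) := Finset.sum_congr rfl h4
      _ = (F.card : ℝ) * (1 / (2*(K:ℝ)+1))^(d+1) := by rw [Finset.sum_const, nsmul_eq_mul]
  have hKpos : (0:ℝ) < 2*(K:ℝ)+1 := by positivity
  have hcard := main_count (d+1) K hK x
  have h6 : (μ {ω | (∑ i, a i ω) = x}).toReal ≤
      3 * Real.sqrt ((2*(K:ℝ)+1) / (((d:ℝ)+1+1) * (2*K))) := by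
    refine h5.trans ?_
    have h7 : (F.card : ℝ) * (1 / (2*(K:ℝ)+1))^(d+1) ≤
        (3 * (2*(K:ℝ)+1)^(d+1) * Real.sqrt ((2*(K:ℝ)+1) / (((d:ℝ)+1+1) * (2*K))))
          * (1 / (2*(K:ℝ)+1))^(d+1) := by
      refine mul_le_mul_of_nonneg_right ?_ (by positivity)
      convert hcard using 4
      · rfl
      push_cast
      ring
    refine h7.trans (le_of_eq ?_)
    have hne : ((2*(K:ℝ)+1))^(d+1) ≠ 0 := by positivity
    rw [one_div, inv_pow]
    field_simp
  refine h6.trans ?_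
  -- final numeric: 3 * sqrt((2K+1)/((d+2)(2K))) ≤ 5 * sqrt(K/d)
  have hdpos : (0:ℝ) < (d:ℝ) := by exact_mod_cast hd
  have hKpos' : (1:ℝ) ≤ (K:ℝ) := by exact_mod_cast hK
  have key : 9 * ((2*(K:ℝ)+1) / (((d:ℝ)+1+1) * (2*K))) ≤ 25 * ((K:ℝ)/(d:ℝ)) := by
    rw [mul_div_assoc' 9, mul_div_assoc' 25, div_le_div_iff₀ (by positivity) hdpos]
    nlinarith [mul_nonneg (sub_nonneg.mpr hKpos') hdpos.le,
      mul_nonneg (mul_nonneg hdpos.le (sub_nonneg.mpr hKpos')) (sub_nonneg.mpr hKpos'),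
      sq_nonneg ((K:ℝ)-1), hdpos.le, hKpos']
  have h8 : Real.sqrt (9 * ((2*(K:ℝ)+1) / (((d:ℝ)+1+1) * (2*K)))) ≤
      Real.sqrt (25 * ((K:ℝ)/(d:ℝ))) := Real.sqrt_le_sqrt key
  have e9 : Real.sqrt (9 * ((2*(K:ℝ)+1) / (((d:ℝ)+1+1) * (2*K)))) =
      3 * Real.sqrt ((2*(K:ℝ)+1) / (((d:ℝ)+1+1) * (2*K))) := by
    rw [Real.sqrt_mul (by norm_num) _, show (9:ℝ) = 3^2 by norm_num,
      Real.sqrt_sq (by norm_num : (0:ℝ) ≤ 3)]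
  have e25 : Real.sqrt (25 * ((K:ℝ)/(d:ℝ))) = 5 * Real.sqrt ((K:ℝ)/(d:ℝ)) := by
    rw [Real.sqrt_mul (by norm_num) _, show (25:ℝ) = 5^2 by norm_num,
      Real.sqrt_sq (by norm_num : (0:ℝ) ≤ 5)]
  rw [e9, e25] at h8
  exact h8
end
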